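/- arXiv:2406.11604 — 5 statements merged into one kernel-verified Lean document; each statement's English description precedes it below -/
import Mathlib

section
/- Let U ⊂ ℝ², let A = [[a, b], [b, d]] : U → (2×2 real symmetric matrices) be uniformly elliptic with constant λ ≥ 1 and Lipschitz on U, let K > 0 satisfy K² ≥ λ² + λ, and let D = diag(1/K, 1). Write ã(x) = a(Dx), b̃(x) = b(Dx), d̃(x) = d(Dx) for x ∈ D⁻¹(U), so that Ã(x) = D⁻¹A(Dx)D⁻¹ = [[K²ã(x), Kb̃(x)], [Kb̃(x), d̃(x)]]. Then K²ã(x) − d̃(x) ≥ K²λ⁻¹ − λ ≥ 1 for all x ∈ D⁻¹(U), and the eigenvalue functions λ±(x) = (K²ã(x) + d̃(x) ± √((K²ã(x) − d̃(x))² + 4K²b̃(x)²))/2 of Ã(x) are Lipschitz on D⁻¹(U), with Lipschitz constant depending only on λ, K and the Lipschitz seminorm of A. -/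
open Matrix

noncomputable section

/-- A matrix-valued function `A` on a set `U` is uniformly elliptic with constant `lam ≥ 1`. -/
def IsUnifElliptic {d : ℕ} (U : Set (Fin d → ℝ))
    (A : (Fin d → ℝ) → Matrix (Fin d) (Fin d) ℝ) (lam : ℝ) : Prop :=
  ∀ x ∈ U,
    (∀ ξ : Fin d → ℝ, lam⁻¹ * (ξ ⬝ᵥ ξ) ≤ ξ ⬝ᵥ (A x).mulVec ξ) ∧
      (∀ ξ η : Fin d → ℝ,
        η ⬝ᵥ (A x).mulVec ξ ≤ lam * (Real.sqrt (ξ ⬝ᵥ ξ) * Real.sqrt (η ⬝ᵥ η)))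

/-- The linear map `D = diag(1/K, 1)` acting on `ℝ²`. -/
def Dmap (K : ℝ) : (Fin 2 → ℝ) → Fin 2 → ℝ := (Matrix.diagonal ![1 / K, 1]).mulVec

lemma sqrt_lip (u v s t : ℝ) :
    |Real.sqrt (u^2+v^2) - Real.sqrt (s^2+t^2)| ≤ |u-s| + |v-t| := by
  have h1 : ∀ p q r w : ℝ, Real.sqrt (p^2+q^2) ≤ Real.sqrt (r^2+w^2) + (|p-r| + |q-w|) := by
    intro p q r w
    have hr : |r| ≤ Real.sqrt (r^2+w^2) := by
      rw [← Real.sqrt_sq_eq_abs]; exact Real.sqrt_le_sqrt (by nlinarith)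
    have hw : |w| ≤ Real.sqrt (r^2+w^2) := by
      rw [← Real.sqrt_sq_eq_abs]; exact Real.sqrt_le_sqrt (by nlinarith)
    have h0 : (0:ℝ) ≤ Real.sqrt (r^2+w^2) := Real.sqrt_nonneg _
    have hs : Real.sqrt (r^2+w^2) ^ 2 = r^2+w^2 := Real.sq_sqrt (by positivity)
    have hRHS : (0:ℝ) ≤ Real.sqrt (r^2+w^2) + (|p-r| + |q-w|) := by positivity
    calc Real.sqrt (p^2+q^2) ≤ Real.sqrt ((Real.sqrt (r^2+w^2) + (|p-r| + |q-w|))^2) := by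
          apply Real.sqrt_le_sqrt
          nlinarith [sq_abs (p-r), sq_abs (q-w), abs_nonneg (p-r), abs_nonneg (q-w),
            le_trans (le_abs_self (r*(p-r))) (le_of_eq (abs_mul r (p-r))),
            le_trans (le_abs_self (w*(q-w))) (le_of_eq (abs_mul w (q-w))),
            mul_nonneg (abs_nonneg (p-r)) (abs_nonneg (q-w))]
      _ = _ := Real.sqrt_sq hRHS
  rw [abs_sub_le_iff]
  constructor
  · have := h1 u v s t; linarith
  · have := h1 s t u v
    have e1 : |s-u| = |u-s| := abs_sub_comm s u
    have e2 : |t-v| = |v-t| := abs_sub_comm t v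
    linarith

theorem stmt1 :
    ∃ C : ℝ → ℝ → NNReal → NNReal,
      ∀ (U : Set (Fin 2 → ℝ)) (a b d : (Fin 2 → ℝ) → ℝ) (lam K : ℝ) (κ : NNReal),
        1 ≤ lam →
        IsUnifElliptic U (fun x => !![a x, b x; b x, d x]) lam →
        LipschitzOnWith κ a U → LipschitzOnWith κ b U → LipschitzOnWith κ d U →
        0 < K → lam ^ 2 + lam ≤ K ^ 2 →
        (∀ x ∈ Dmap K ⁻¹' U,
            (1 : ℝ) ≤ K ^ 2 * lam⁻¹ - lam ∧
              K ^ 2 * lam⁻¹ - lam ≤ K ^ 2 * a (Dmap K x) - d (Dmap K x)) ∧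
          LipschitzOnWith (C lam K κ)
            (fun x => (K ^ 2 * a (Dmap K x) + d (Dmap K x) +
              Real.sqrt ((K ^ 2 * a (Dmap K x) - d (Dmap K x)) ^ 2 +
                4 * K ^ 2 * b (Dmap K x) ^ 2)) / 2) (Dmap K ⁻¹' U) ∧
          LipschitzOnWith (C lam K κ)
            (fun x => (K ^ 2 * a (Dmap K x) + d (Dmap K x) -
              Real.sqrt ((K ^ 2 * a (Dmap K x) - d (Dmap K x)) ^ 2 +
                4 * K ^ 2 * b (Dmap K x) ^ 2)) / 2) (Dmap K ⁻¹' U) := by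
  refine ⟨fun lam K κ => κ * Real.toNNReal ((K^2 + 1 + K) * max (1/K) 1), ?_⟩
  intro U a b d lam K κ hlam hell ha hb hd hK hK2
  have hlam0 : (0:ℝ) < lam := lt_of_lt_of_le one_pos hlam
  have hK20 : (0:ℝ) < K^2 := by positivity
  set m := max (1/K) 1 with hm
  have hm0 : (0:ℝ) ≤ m := by positivity
  -- distance contraction of Dmap
  have hD : ∀ x y : Fin 2 → ℝ, dist (Dmap K x) (Dmap K y) ≤ m * dist x y := by
    intro x y
    rw [dist_pi_le_iff (by positivity)]
    intro i
    have hxy : dist (x i) (y i) ≤ dist x y := dist_le_pi_dist x y i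
    simp only [Dmap, Matrix.mulVec_diagonal, Real.dist_eq] at *
    rw [show ![1/K,1] i * x i - ![1/K,1] i * y i = ![1/K,1] i * (x i - y i) by ring, abs_mul]
    have h1 : |(![1/K,1] : Fin 2 → ℝ) i| ≤ m := by
      fin_cases i <;> simp [abs_of_pos, hK]
      · exact le_trans (le_of_eq (one_div K).symm) (le_max_left _ _)
      · exact le_max_right _ _
    calc |(![1/K,1] : Fin 2 → ℝ) i| * |x i - y i| ≤ m * |x i - y i| :=
          mul_le_mul_of_nonneg_right h1 (abs_nonneg _)
      _ ≤ m * dist x y := mul_le_mul_of_nonneg_left hxy hm0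
  -- pointwise part
  have hpt : ∀ x ∈ Dmap K ⁻¹' U,
      (1 : ℝ) ≤ K ^ 2 * lam⁻¹ - lam ∧
        K ^ 2 * lam⁻¹ - lam ≤ K ^ 2 * a (Dmap K x) - d (Dmap K x) := by
    intro x hx
    obtain ⟨h1, h2⟩ := hell (Dmap K x) hx
    have hA : lam⁻¹ ≤ a (Dmap K x) := by
      have := h1 ![1,0]
      simp [dotProduct, Matrix.mulVec, Fin.sum_univ_two] at this
      linarith
    have hDd : d (Dmap K x) ≤ lam := by
      have := h2 ![0,1] ![0,1]
      simp [dotProduct, Matrix.mulVec, Fin.sum_univ_two] at this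
      linarith
    have hinv : (0:ℝ) < lam⁻¹ := by positivity
    constructor
    · have h3 : (lam^2 + lam) * lam⁻¹ ≤ K^2 * lam⁻¹ :=
        mul_le_mul_of_nonneg_right hK2 hinv.le
      have h4 : (lam^2 + lam) * lam⁻¹ = lam + 1 := by field_simp
      linarith
    · nlinarith [mul_le_mul_of_nonneg_left hA hK20.le]
  refine ⟨hpt, ?_, ?_⟩ <;>
  · rw [lipschitzOnWith_iff_dist_le_mul]
    intro x hx y hy
    have hc : ((κ * Real.toNNReal ((K^2 + 1 + K) * m) : NNReal) : ℝ)
        = (κ : ℝ) * ((K^2 + 1 + K) * m) := by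
      rw [NNReal.coe_mul, Real.coe_toNNReal _ (by positivity)]
    set p := Dmap K x with hp
    set q := Dmap K y with hq
    have hδ : dist p q ≤ m * dist x y := hD x y
    have hκ0 : (0:ℝ) ≤ (κ:ℝ) := κ.coe_nonneg
    have hap : |a p - a q| ≤ (κ:ℝ) * (m * dist x y) := by
      have := ha.dist_le_mul p hx q hy
      rw [Real.dist_eq] at this
      calc |a p - a q| ≤ (κ:ℝ) * dist p q := this
        _ ≤ (κ:ℝ) * (m * dist x y) := mul_le_mul_of_nonneg_left hδ hκ0
    have hbp : |b p - b q| ≤ (κ:ℝ) * (m * dist x y) := by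
      have := hb.dist_le_mul p hx q hy
      rw [Real.dist_eq] at this
      calc |b p - b q| ≤ (κ:ℝ) * dist p q := this
        _ ≤ (κ:ℝ) * (m * dist x y) := mul_le_mul_of_nonneg_left hδ hκ0
    have hdp : |d p - d q| ≤ (κ:ℝ) * (m * dist x y) := by
      have := hd.dist_le_mul p hx q hy
      rw [Real.dist_eq] at this
      calc |d p - d q| ≤ (κ:ℝ) * dist p q := this
        _ ≤ (κ:ℝ) * (m * dist x y) := mul_le_mul_of_nonneg_left hδ hκ0
    -- bounds on the sum and the sqrt term
    have hS : |(K^2*a p + d p) - (K^2*a q + d q)| ≤ (K^2 + 1) * ((κ:ℝ) * (m * dist x y)) := by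
      have h1 : |K^2*a p - K^2*a q| = K^2 * |a p - a q| := by
        rw [show K^2*a p - K^2*a q = K^2 * (a p - a q) by ring, abs_mul, abs_of_pos hK20]
      have h2 := abs_add_le (K^2*a p - K^2*a q) (d p - d q)
      have h3 : K^2 * |a p - a q| ≤ K^2 * ((κ:ℝ) * (m * dist x y)) :=
        mul_le_mul_of_nonneg_left hap hK20.le
      calc |(K^2*a p + d p) - (K^2*a q + d q)|
          = |(K^2*a p - K^2*a q) + (d p - d q)| := by ring_nf
        _ ≤ |K^2*a p - K^2*a q| + |d p - d q| := h2
        _ ≤ K^2 * ((κ:ℝ) * (m * dist x y)) + (κ:ℝ) * (m * dist x y) := by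
            rw [h1] at *; linarith
        _ = (K^2 + 1) * ((κ:ℝ) * (m * dist x y)) := by ring
    have hf : |Real.sqrt ((K^2*a p - d p)^2 + 4*K^2*b p^2)
          - Real.sqrt ((K^2*a q - d q)^2 + 4*K^2*b q^2)|
        ≤ (K^2 + 1 + 2*K) * ((κ:ℝ) * (m * dist x y)) := by
      have e1 : (K^2*a p - d p)^2 + 4*K^2*b p^2 = (K^2*a p - d p)^2 + (2*K*b p)^2 := by ring
      have e2 : (K^2*a q - d q)^2 + 4*K^2*b q^2 = (K^2*a q - d q)^2 + (2*K*b q)^2 := by ring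
      rw [e1, e2]
      have key := sqrt_lip (K^2*a p - d p) (2*K*b p) (K^2*a q - d q) (2*K*b q)
      have hE : |(K^2*a p - d p) - (K^2*a q - d q)| ≤ (K^2 + 1) * ((κ:ℝ) * (m * dist x y)) := by
        have h1 : |K^2*a p - K^2*a q| = K^2 * |a p - a q| := by
          rw [show K^2*a p - K^2*a q = K^2 * (a p - a q) by ring, abs_mul, abs_of_pos hK20]
        have h2 : |(K^2*a p - K^2*a q) + -(d p - d q)| ≤ |K^2*a p - K^2*a q| + |-(d p - d q)| :=
          abs_add_le _ _
        rw [abs_neg] at h2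
        have h3 : K^2 * |a p - a q| ≤ K^2 * ((κ:ℝ) * (m * dist x y)) :=
          mul_le_mul_of_nonneg_left hap hK20.le
        calc |(K^2*a p - d p) - (K^2*a q - d q)|
            = |(K^2*a p - K^2*a q) + -(d p - d q)| := by ring_nf
          _ ≤ |K^2*a p - K^2*a q| + |d p - d q| := h2
          _ ≤ (K^2 + 1) * ((κ:ℝ) * (m * dist x y)) := by rw [h1]; linarith
      have hG : |2*K*b p - 2*K*b q| ≤ 2*K * ((κ:ℝ) * (m * dist x y)) := by
        rw [show 2*K*b p - 2*K*b q = 2*K * (b p - b q) by ring, abs_mul,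
          abs_of_pos (by positivity : (0:ℝ) < 2*K)]
        exact mul_le_mul_of_nonneg_left hbp (by positivity)
      calc _ ≤ |(K^2*a p - d p) - (K^2*a q - d q)| + |2*K*b p - 2*K*b q| := key
        _ ≤ (K^2 + 1) * ((κ:ℝ) * (m * dist x y)) + 2*K * ((κ:ℝ) * (m * dist x y)) := by linarith
        _ = (K^2 + 1 + 2*K) * ((κ:ℝ) * (m * dist x y)) := by ring
    rw [Real.dist_eq, hc]
    have habs := abs_add_le ((K^2*a p + d p) - (K^2*a q + d q))
      (Real.sqrt ((K^2*a p - d p)^2 + 4*K^2*b p^2)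
        - Real.sqrt ((K^2*a q - d q)^2 + 4*K^2*b q^2))
    have habs2 := abs_sub (((K^2*a p + d p) - (K^2*a q + d q)))
      ((Real.sqrt ((K^2*a p - d p)^2 + 4*K^2*b p^2)
        - Real.sqrt ((K^2*a q - d q)^2 + 4*K^2*b q^2)))
    first
    | (rw [show (K ^ 2 * a p + d p +
          Real.sqrt ((K ^ 2 * a p - d p) ^ 2 + 4 * K ^ 2 * b p ^ 2)) / 2 -
          (K ^ 2 * a q + d q +
          Real.sqrt ((K ^ 2 * a q - d q) ^ 2 + 4 * K ^ 2 * b q ^ 2)) / 2 =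
          (((K^2*a p + d p) - (K^2*a q + d q)) +
          (Real.sqrt ((K^2*a p - d p)^2 + 4*K^2*b p^2)
            - Real.sqrt ((K^2*a q - d q)^2 + 4*K^2*b q^2))) / 2 by ring,
        abs_div, abs_two];
       nlinarith [abs_nonneg (((K^2*a p + d p) - (K^2*a q + d q)))])
    | (rw [show (K ^ 2 * a p + d p -
          Real.sqrt ((K ^ 2 * a p - d p) ^ 2 + 4 * K ^ 2 * b p ^ 2)) / 2 -
          (K ^ 2 * a q + d q -
          Real.sqrt ((K ^ 2 * a q - d q) ^ 2 + 4 * K ^ 2 * b q ^ 2)) / 2 =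
          (((K^2*a p + d p) - (K^2*a q + d q)) -
          (Real.sqrt ((K^2*a p - d p)^2 + 4*K^2*b p^2)
            - Real.sqrt ((K^2*a q - d q)^2 + 4*K^2*b q^2))) / 2 by ring,
        abs_div, abs_two];
       nlinarith [abs_nonneg (((K^2*a p + d p) - (K^2*a q + d q)))])
end
end

section
/- Let U ⊂ ℝ², let A = [[a, b], [b, d]] : U → (2×2 real symmetric matrices) be uniformly elliptic with constant λ ≥ 1 and Lipschitz on U, let K > 0 satisfy K² ≥ λ² + λ, and let D = diag(1/K, 1). Write ã(x) = a(Dx), b̃(x) = b(Dx), d̃(x) = d(Dx), Ã(x) = D⁻¹A(Dx)D⁻¹ = [[K²ã, Kb̃], [Kb̃, d̃]], and let λ±(x) = (K²ã + d̃ ± √((K²ã − d̃)² + 4K²b̃²))/2 be the eigenvalues of Ã(x). Define v⁺(x) = (λ₊(x) − d̃(x), Kb̃(x)) and v⁻(x) = (Kb̃(x), λ₋(x) − K²ã(x)). Then for every x ∈ D⁻¹(U): Ã(x)v⁺(x) = λ₊(x)v⁺(x), Ã(x)v⁻(x) = λ₋(x)v⁻(x), ⟨v⁺(x), v⁻(x)⟩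 = 0, and ‖v⁺(x)‖ = ‖v⁻(x)‖ ≥ 1; moreover v⁺ and v⁻ are Lipschitz on D⁻¹(U). -/
open Matrix

noncomputable section

/-- The eigenvalue `λ₊` of `Ã(x) = D⁻¹A(Dx)D⁻¹`. -/
def lamPlus (a b d : (Fin 2 → ℝ) → ℝ) (K : ℝ) (x : Fin 2 → ℝ) : ℝ :=
  (K ^ 2 * a (Dmap K x) + d (Dmap K x) +
    Real.sqrt ((K ^ 2 * a (Dmap K x) - d (Dmap K x)) ^ 2 + 4 * K ^ 2 * b (Dmap K x) ^ 2)) / 2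

/-- The eigenvalue `λ₋` of `Ã(x) = D⁻¹A(Dx)D⁻¹`. -/
def lamMinus (a b d : (Fin 2 → ℝ) → ℝ) (K : ℝ) (x : Fin 2 → ℝ) : ℝ :=
  (K ^ 2 * a (Dmap K x) + d (Dmap K x) -
    Real.sqrt ((K ^ 2 * a (Dmap K x) - d (Dmap K x)) ^ 2 + 4 * K ^ 2 * b (Dmap K x) ^ 2)) / 2

/-- The vector `v⁺(x) = (λ₊(x) − d̃(x), Kb̃(x))`. -/
def vPlus (a b d : (Fin 2 → ℝ) → ℝ) (K : ℝ) (x : Fin 2 → ℝ) : Fin 2 → ℝ :=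
  ![lamPlus a b d K x - d (Dmap K x), K * b (Dmap K x)]

/-- The vector `v⁻(x) = (Kb̃(x), λ₋(x) − K²ã(x))`. -/
def vMinus (a b d : (Fin 2 → ℝ) → ℝ) (K : ℝ) (x : Fin 2 → ℝ) : Fin 2 → ℝ :=
  ![K * b (Dmap K x), lamMinus a b d K x - K ^ 2 * a (Dmap K x)]

/-- `(s,t) ↦ √(s² + t²)` is 1-Lipschitz in each variable (triangle inequality form). -/
lemma sqrt_pair_lip (p q r s : ℝ) :
    |Real.sqrt (p^2+q^2) - Real.sqrt (r^2+s^2)| ≤ |p - r| + |q - s| := by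
  have h1 : ∀ u v : ℝ, Real.sqrt (u^2+v^2) = ‖(⟨u, v⟩ : ℂ)‖ := by
    intro u v
    rw [Complex.norm_def, Complex.normSq_mk]
    ring_nf
  rw [h1, h1]
  calc |‖(⟨p,q⟩ : ℂ)‖ - ‖(⟨r,s⟩ : ℂ)‖| ≤ ‖(⟨p,q⟩ - ⟨r,s⟩ : ℂ)‖ :=
        abs_norm_sub_norm_le _ _
    _ ≤ |p - r| + |q - s| := by
        rw [show (⟨p,q⟩ - ⟨r,s⟩ : ℂ) = ⟨p - r, q - s⟩ by rfl]
        rw [← h1]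
        have := Real.sqrt_le_sqrt (show (p-r)^2 + (q-s)^2 ≤ (|p-r| + |q-s|)^2 by
          nlinarith [abs_nonneg (p-r), abs_nonneg (q-s), sq_abs (p-r), sq_abs (q-s),
            mul_nonneg (abs_nonneg (p-r)) (abs_nonneg (q-s))])
        calc Real.sqrt ((p-r)^2 + (q-s)^2) ≤ Real.sqrt ((|p-r| + |q-s|)^2) := this
          _ = |p-r| + |q-s| := Real.sqrt_sq (by positivity)

/-- `v⁺` is an eigenvector for `λ₊` (pure algebra). -/
lemma eig_plus' (p q r K s : ℝ) (hs : s^2 = (K^2*p - r)^2 + 4*K^2*q^2) :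
    (!![K^2*p, K*q; K*q, r]).mulVec ![(K^2*p + r + s)/2 - r, K*q]
      = ((K^2*p + r + s)/2) • ![(K^2*p + r + s)/2 - r, K*q] := by
  funext i
  fin_cases i <;>
    simp [Matrix.mulVec, dotProduct, Fin.sum_univ_two] <;>
    nlinarith [hs]

/-- `v⁻` is an eigenvector for `λ₋` (pure algebra). -/
lemma eig_minus' (p q r K s : ℝ) (hs : s^2 = (K^2*p - r)^2 + 4*K^2*q^2) :
    (!![K^2*p, K*q; K*q, r]).mulVec ![K*q, (K^2*p + r - s)/2 - K^2*p]
      = ((K^2*p + r - s)/2) • ![K*q, (K^2*p + r - s)/2 - K^2*p] := by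
  funext i
  fin_cases i <;>
    simp [Matrix.mulVec, dotProduct, Fin.sum_univ_two] <;>
    nlinarith [hs]

/-- Quantitative Lipschitz bounds for the components of `v⁺` and `v⁻`. -/
lemma lip_bound (K E p1 q1 r1 p2 q2 r2 : ℝ) (hK : 0 < K) (hE0 : 0 ≤ E)
    (hda : |p1 - p2| ≤ E) (hdb : |q1 - q2| ≤ E) (hdd : |r1 - r2| ≤ E) :
    |(K^2*p1 + r1 + Real.sqrt ((K^2*p1 - r1)^2 + 4*K^2*q1^2))/2 - r1 -
      ((K^2*p2 + r2 + Real.sqrt ((K^2*p2 - r2)^2 + 4*K^2*q2^2))/2 - r2)| ≤ (K^2 + K + 1) * E ∧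
    |(K^2*p1 + r1 - Real.sqrt ((K^2*p1 - r1)^2 + 4*K^2*q1^2))/2 - K^2*p1 -
      ((K^2*p2 + r2 - Real.sqrt ((K^2*p2 - r2)^2 + 4*K^2*q2^2))/2 - K^2*p2)| ≤ (K^2 + K + 1) * E ∧
    |K*q1 - K*q2| ≤ (K^2 + K + 1) * E := by
  have hb1 : |K^2*p1 - K^2*p2| ≤ K^2*E := by
    rw [show K^2*p1 - K^2*p2 = K^2*(p1-p2) by ring, abs_mul, abs_of_nonneg (sq_nonneg K)]
    exact mul_le_mul_of_nonneg_left hda (sq_nonneg K)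
  have hb2 : |K*q1 - K*q2| ≤ K*E := by
    rw [show K*q1 - K*q2 = K*(q1-q2) by ring, abs_mul, abs_of_pos hK]
    exact mul_le_mul_of_nonneg_left hdb hK.le
  have hdS : |Real.sqrt ((K^2*p1 - r1)^2 + 4*K^2*q1^2)
      - Real.sqrt ((K^2*p2 - r2)^2 + 4*K^2*q2^2)| ≤ K^2*E + E + 2*K*E := by
    have key := sqrt_pair_lip (K^2*p1 - r1) (2*K*q1) (K^2*p2 - r2) (2*K*q2)
    rw [show (2*K*q1)^2 = 4*K^2*q1^2 by ring, show (2*K*q2)^2 = 4*K^2*q2^2 by ring] at key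
    have e1 : |K^2*p1 - r1 - (K^2*p2 - r2)| ≤ K^2*E + E := by
      calc |K^2*p1 - r1 - (K^2*p2 - r2)| = |(K^2*p1 - K^2*p2) + -(r1 - r2)| := by
            congr 1; ring
        _ ≤ |K^2*p1 - K^2*p2| + |-(r1 - r2)| := abs_add_le _ _
        _ ≤ K^2*E + E := by rw [abs_neg]; exact add_le_add hb1 hdd
    have e2 : |2*K*q1 - 2*K*q2| ≤ 2*K*E := by
      rw [show 2*K*q1 - 2*K*q2 = (2*K)*(q1 - q2) by ring, abs_mul,
        abs_of_nonneg (by positivity : (0:ℝ) ≤ 2*K)]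
      exact mul_le_mul_of_nonneg_left hdb (by positivity)
    linarith
  have hKE : (0:ℝ) ≤ K^2*E := by positivity
  have hKE2 : (0:ℝ) ≤ K*E := by positivity
  have h1 := abs_le.mp hb1
  have h2 := abs_le.mp hb2
  have h3 := abs_le.mp hdS
  have h4 := abs_le.mp hdd
  exact ⟨abs_le.mpr ⟨by linarith, by linarith⟩, abs_le.mpr ⟨by linarith, by linarith⟩,
    by linarith [abs_le.mp hb2]⟩

theorem stmt2 (U : Set (Fin 2 → ℝ)) (a b d : (Fin 2 → ℝ) → ℝ) (lam K : ℝ) (κ : NNReal)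
    (hlam : 1 ≤ lam)
    (hell : IsUnifElliptic U (fun x => !![a x, b x; b x, d x]) lam)
    (ha : LipschitzOnWith κ a U) (hb : LipschitzOnWith κ b U) (hd : LipschitzOnWith κ d U)
    (hK : 0 < K) (hK2 : lam ^ 2 + lam ≤ K ^ 2) :
    (∀ x ∈ Dmap K ⁻¹' U,
        (!![K ^ 2 * a (Dmap K x), K * b (Dmap K x);
            K * b (Dmap K x), d (Dmap K x)]).mulVec (vPlus a b d K x) =
          lamPlus a b d K x • vPlus a b d K x ∧
        (!![K ^ 2 * a (Dmap K x), K * b (Dmap K x);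
            K * b (Dmap K x), d (Dmap K x)]).mulVec (vMinus a b d K x) =
          lamMinus a b d K x • vMinus a b d K x ∧
        vPlus a b d K x ⬝ᵥ vMinus a b d K x = 0 ∧
        Real.sqrt (vPlus a b d K x ⬝ᵥ vPlus a b d K x) =
          Real.sqrt (vMinus a b d K x ⬝ᵥ vMinus a b d K x) ∧
        1 ≤ Real.sqrt (vPlus a b d K x ⬝ᵥ vPlus a b d K x)) ∧
      ∃ c : NNReal,
        LipschitzOnWith c (vPlus a b d K) (Dmap K ⁻¹' U) ∧
        LipschitzOnWith c (vMinus a b d K) (Dmap K ⁻¹' U) := by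
  have hlam0 : (0:ℝ) < lam := lt_of_lt_of_le one_pos hlam
  constructor
  · -- pointwise properties
    intro x hx
    have hx' : Dmap K x ∈ U := hx
    set p := a (Dmap K x) with hp_def
    set q := b (Dmap K x) with hq_def
    set r := d (Dmap K x) with hr_def
    have hrad : (0:ℝ) ≤ (K^2*p - r)^2 + 4*K^2*q^2 := by positivity
    set S := Real.sqrt ((K ^ 2 * p - r) ^ 2 + 4 * K ^ 2 * q ^ 2) with hS_def
    have hs : S^2 = (K^2*p - r)^2 + 4*K^2*q^2 := Real.sq_sqrt hrad
    have hlp : lamPlus a b d K x = (K^2*p + r + S)/2 := rfl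
    have hlm : lamMinus a b d K x = (K^2*p + r - S)/2 := rfl
    have hvp : vPlus a b d K x = ![(K^2*p + r + S)/2 - r, K*q] := by
      rw [vPlus, hlp]
    have hvm : vMinus a b d K x = ![K*q, (K^2*p + r - S)/2 - K^2*p] := by
      rw [vMinus, hlm]
    obtain ⟨h1, h2⟩ := hell (Dmap K x) hx'
    have hA : lam⁻¹ ≤ p := by
      have := h1 ![1, 0]
      simp [dotProduct, Matrix.mulVec, Fin.sum_univ_two] at this
      linarith
    have hD : r ≤ lam := by
      have := h2 ![0, 1] ![0, 1]
      simp [dotProduct, Matrix.mulVec, Fin.sum_univ_two] at this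
      linarith
    have hA0 : 0 ≤ p := le_trans (inv_nonneg.mpr hlam0.le) hA
    have hAl : 1 ≤ lam * p := by
      rw [← mul_inv_cancel₀ (ne_of_gt hlam0)]
      exact mul_le_mul_of_nonneg_left hA hlam0.le
    have hgap : 1 ≤ K^2*p - r := by
      nlinarith [mul_nonneg (sub_nonneg.mpr hK2) hA0,
        mul_le_mul_of_nonneg_left hAl (by linarith : (0:ℝ) ≤ lam + 1)]
    have hSge : K^2*p - r ≤ S := by
      have h := Real.sqrt_le_sqrt
        (show (K^2*p - r)^2 ≤ (K^2*p - r)^2 + 4*K^2*q^2 by nlinarith [sq_nonneg (K*q)])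
      rw [Real.sqrt_sq_eq_abs] at h
      exact le_trans (le_abs_self _) h
    have hcomp1 : 1 ≤ (K^2*p + r + S)/2 - r := by linarith
    refine ⟨?_, ?_, ?_, ?_, ?_⟩
    · rw [hvp, hlp]
      exact eig_plus' p q r K S hs
    · rw [hvm, hlm]
      exact eig_minus' p q r K S hs
    · rw [hvp, hvm]
      simp [dotProduct, Fin.sum_univ_two]
      ring
    · rw [hvp, hvm]
      congr 1
      simp [dotProduct, Fin.sum_univ_two]
      ring
    · rw [hvp]
      rw [show (1:ℝ) = Real.sqrt 1 from Real.sqrt_one.symm]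
      apply Real.sqrt_le_sqrt
      simp [dotProduct, Fin.sum_univ_two]
      nlinarith [hcomp1, sq_nonneg (K*q)]
  · -- Lipschitz part
    set M : ℝ := max (1/K) 1 with hM_def
    have hM0 : (0:ℝ) ≤ M := le_trans zero_le_one (le_max_right _ _)
    set C : ℝ := (κ:ℝ) * M * (K^2 + K + 1) with hC_def
    have hC0 : (0:ℝ) ≤ C := by positivity
    have main : ∀ x ∈ Dmap K ⁻¹' U, ∀ y ∈ Dmap K ⁻¹' U,
        dist (vPlus a b d K x) (vPlus a b d K y) ≤ C * dist x y ∧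
        dist (vMinus a b d K x) (vMinus a b d K y) ≤ C * dist x y := by
      intro x hx y hy
      have hx' : Dmap K x ∈ U := hx
      have hy' : Dmap K y ∈ U := hy
      set E : ℝ := (κ:ℝ) * M * dist x y with hE_def
      have hE0 : (0:ℝ) ≤ E := by positivity
      have hDd : dist (Dmap K x) (Dmap K y) ≤ M * dist x y := by
        rw [dist_pi_le_iff (by positivity)]
        refine Fin.forall_fin_two.mpr ⟨?_, ?_⟩
        · have hx0 : Dmap K x 0 = 1/K * x 0 := by simp [Dmap, Matrix.mulVec_diagonal]
          have hy0 : Dmap K y 0 = 1/K * y 0 := by simp [Dmap, Matrix.mulVec_diagonal]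
          rw [hx0, hy0, Real.dist_eq,
            show 1/K * x 0 - 1/K * y 0 = (1/K) * (x 0 - y 0) by ring, abs_mul,
            abs_of_pos (show (0:ℝ) < 1/K by positivity)]
          calc (1/K) * |x 0 - y 0| ≤ (1/K) * dist x y := by
                refine mul_le_mul_of_nonneg_left ?_ (by positivity)
                rw [← Real.dist_eq]
                exact dist_le_pi_dist x y 0
            _ ≤ M * dist x y := mul_le_mul_of_nonneg_right (le_max_left _ _) dist_nonneg
        · have hx1 : Dmap K x 1 = x 1 := by simp [Dmap, Matrix.mulVec_diagonal]
          have hy1 : Dmap K y 1 = y 1 := by simp [Dmap, Matrix.mulVec_diagonal]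
          rw [hx1, hy1]
          calc dist (x 1) (y 1) ≤ dist x y := dist_le_pi_dist x y 1
            _ = 1 * dist x y := (one_mul _).symm
            _ ≤ M * dist x y := mul_le_mul_of_nonneg_right (le_max_right _ _) dist_nonneg
      have hda : |a (Dmap K x) - a (Dmap K y)| ≤ E := by
        have h := lipschitzOnWith_iff_dist_le_mul.mp ha _ hx' _ hy'
        rw [Real.dist_eq] at h
        calc |a (Dmap K x) - a (Dmap K y)| ≤ (κ:ℝ) * dist (Dmap K x) (Dmap K y) := h
          _ ≤ (κ:ℝ) * (M * dist x y) := mul_le_mul_of_nonneg_left hDd κ.coe_nonneg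
          _ = E := by rw [hE_def]; ring
      have hdb : |b (Dmap K x) - b (Dmap K y)| ≤ E := by
        have h := lipschitzOnWith_iff_dist_le_mul.mp hb _ hx' _ hy'
        rw [Real.dist_eq] at h
        calc |b (Dmap K x) - b (Dmap K y)| ≤ (κ:ℝ) * dist (Dmap K x) (Dmap K y) := h
          _ ≤ (κ:ℝ) * (M * dist x y) := mul_le_mul_of_nonneg_left hDd κ.coe_nonneg
          _ = E := by rw [hE_def]; ring
      have hdd : |d (Dmap K x) - d (Dmap K y)| ≤ E := by
        have h := lipschitzOnWith_iff_dist_le_mul.mp hd _ hx' _ hy'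
        rw [Real.dist_eq] at h
        calc |d (Dmap K x) - d (Dmap K y)| ≤ (κ:ℝ) * dist (Dmap K x) (Dmap K y) := h
          _ ≤ (κ:ℝ) * (M * dist x y) := mul_le_mul_of_nonneg_left hDd κ.coe_nonneg
          _ = E := by rw [hE_def]; ring
      obtain ⟨L1, L2, L3⟩ := lip_bound K E (a (Dmap K x)) (b (Dmap K x)) (d (Dmap K x))
        (a (Dmap K y)) (b (Dmap K y)) (d (Dmap K y)) hK hE0 hda hdb hdd
      have hCE : C * dist x y = (K^2 + K + 1) * E := by
        rw [hC_def, hE_def]; ring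
      have hCd0 : (0:ℝ) ≤ C * dist x y := mul_nonneg hC0 dist_nonneg
      constructor
      · rw [dist_pi_le_iff hCd0]
        refine Fin.forall_fin_two.mpr ⟨?_, ?_⟩
        · rw [Real.dist_eq, hCE]
          exact L1
        · rw [Real.dist_eq, hCE]
          exact L3
      · rw [dist_pi_le_iff hCd0]
        refine Fin.forall_fin_two.mpr ⟨?_, ?_⟩
        · rw [Real.dist_eq, hCE]
          exact L3
        · rw [Real.dist_eq, hCE]
          exact L2
    refine ⟨C.toNNReal, ?_, ?_⟩ <;>
      · rw [lipschitzOnWith_iff_dist_le_mul]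
        intro x hx y hy
        rw [Real.coe_toNNReal _ hC0]
        first
          | exact (main x hx y hy).1
          | exact (main x hx y hy).2
end
end

section
/- Let U ⊂ ℝ² be open and let A = (a_{ij}) be uniformly elliptic with constant λ ≥ 1 and Lipschitz on U, and suppose its symmetric part satisfies A₀ = (A + Aᵀ)/2 = Rᵀ B R, where R is a rotation-matrix-valued Lipschitz function on U and B = diag(b₁, b₂) has Lipschitz entries on U. Let u ∈ C²(U) satisfy Σ_{i,j=1}^2 ∂_i(a_{ij} ∂_j u) = 0 a.e. in U. Then a.e. in U: Σ_{i=1}^2 ∂^i(b_i ∂^i u) = −Σ_{i=1}^2 b_i ∂^i u · div R_iᵀ − Σ_{i,j=1}^2 ∂_i((a_{ij} − a_{ji})/2) ∂_j u. In particular, there is a constant C depending only on λ and the Lipschitz seminorms of A, R, B such that |Σ_{i=1}^2 ∂^i(b_i ∂^i u)| ≤ C|∇u| and |b₁∂^{1,1}u + b₂∂^{2,2}u| ≤ C|∇u| a.e. in U. -/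
open Matrix MeasureTheory

noncomputable section

/-- The `i`-th partial derivative of `f` at `x` (via `fderiv`, understood at points of
differentiability, which for Lipschitz `f` is a.e. by Rademacher's theorem). -/
def pd (i : Fin 2) (f : (Fin 2 → ℝ) → ℝ) (x : Fin 2 → ℝ) : ℝ :=
  fderiv ℝ f x (Pi.single i 1)

/-- The gradient of `f` at `x`. -/
def grad (f : (Fin 2 → ℝ) → ℝ) (x : Fin 2 → ℝ) : Fin 2 → ℝ := fun i => pd i f x

/-- The directional derivative `∂^i f = R_i · ∇f`, where `R_i` is the `i`-th row of `R`. -/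
def dirD (R : (Fin 2 → ℝ) → Matrix (Fin 2) (Fin 2) ℝ) (i : Fin 2)
    (f : (Fin 2 → ℝ) → ℝ) (x : Fin 2 → ℝ) : ℝ :=
  R x i ⬝ᵥ grad f x

/-- `div R_iᵀ = Σ_j ∂_j R_{i,j}`. -/
def divRow (R : (Fin 2 → ℝ) → Matrix (Fin 2) (Fin 2) ℝ) (i : Fin 2) (x : Fin 2 → ℝ) : ℝ :=
  ∑ j, pd j (fun y => R y i j) x

open Topology

/-! ### Auxiliary lemmas -/

lemma pd_abs_le {f : (Fin 2 → ℝ) → ℝ} {κ : NNReal} {U : Set (Fin 2 → ℝ)} {x : Fin 2 → ℝ}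
    (hU : IsOpen U) (hx : x ∈ U) (hf : LipschitzOnWith κ f U) (i : Fin 2) :
    |pd i f x| ≤ κ := by
  have h1 : ‖fderiv ℝ f x‖ ≤ κ := norm_fderiv_le_of_lipschitzOn ℝ (hU.mem_nhds hx) hf
  calc |pd i f x| = ‖fderiv ℝ f x (Pi.single i 1)‖ := rfl
    _ ≤ ‖fderiv ℝ f x‖ * ‖(Pi.single i (1:ℝ) : Fin 2 → ℝ)‖ := (fderiv ℝ f x).le_opNorm _
    _ ≤ κ * 1 := by
        apply mul_le_mul h1 _ (norm_nonneg _) κ.coe_nonneg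
        rw [Pi.norm_single]; simp
    _ = κ := mul_one _

lemma pd_mul {f g : (Fin 2 → ℝ) → ℝ} {x : Fin 2 → ℝ} (hf : DifferentiableAt ℝ f x)
    (hg : DifferentiableAt ℝ g x) (k : Fin 2) :
    pd k (fun y => f y * g y) x = pd k f x * g x + f x * pd k g x := by
  unfold pd; rw [fderiv_fun_mul hf hg]; simp; ring

lemma pd_sum {f : Fin 2 → (Fin 2 → ℝ) → ℝ} {x : Fin 2 → ℝ}
    (hf : ∀ i, DifferentiableAt ℝ (f i) x) (k : Fin 2) :
    pd k (fun y => ∑ i, f i y) x = ∑ i, pd k (f i) x := by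
  unfold pd; rw [fderiv_fun_sum (fun i _ => hf i)]; simp

lemma pd_add {f g : (Fin 2 → ℝ) → ℝ} {x : Fin 2 → ℝ} (hf : DifferentiableAt ℝ f x)
    (hg : DifferentiableAt ℝ g x) (k : Fin 2) :
    pd k (fun y => f y + g y) x = pd k f x + pd k g x := by
  unfold pd; rw [fderiv_fun_add hf hg]; simp

lemma pd_sub {f g : (Fin 2 → ℝ) → ℝ} {x : Fin 2 → ℝ} (hf : DifferentiableAt ℝ f x)
    (hg : DifferentiableAt ℝ g x) (k : Fin 2) :
    pd k (fun y => f y - g y) x = pd k f x - pd k g x := by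
  unfold pd; rw [fderiv_fun_sub hf hg]; simp

lemma pd_div_const {f : (Fin 2 → ℝ) → ℝ} {x : Fin 2 → ℝ} (hf : DifferentiableAt ℝ f x)
    (c : ℝ) (k : Fin 2) :
    pd k (fun y => f y / c) x = pd k f x / c := by
  have h : (fun y => f y / c) = fun y => c⁻¹ * f y := by
    funext y; rw [div_eq_inv_mul]
  unfold pd
  rw [h, fderiv_const_mul hf]
  simp [div_eq_inv_mul]

lemma pd_mul3 {f g h : (Fin 2 → ℝ) → ℝ} {x : Fin 2 → ℝ} (hf : DifferentiableAt ℝ f x)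
    (hg : DifferentiableAt ℝ g x) (hh : DifferentiableAt ℝ h x) (k : Fin 2) :
    pd k (fun y => f y * g y * h y) x =
      pd k f x * g x * h x + f x * pd k g x * h x + f x * g x * pd k h x := by
  rw [pd_mul (hf.fun_mul hg) hh k, pd_mul hf hg k]; ring

lemma pd_pd_symm {u : (Fin 2 → ℝ) → ℝ} {x : Fin 2 → ℝ} (hu2 : ContDiffAt ℝ 2 u x) (j k : Fin 2) :
    pd k (fun y => pd j u y) x = pd j (fun y => pd k u y) x := by
  have hfd : DifferentiableAt ℝ (fderiv ℝ u) x :=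
    (hu2.fderiv_right (m := 1) le_rfl).differentiableAt one_ne_zero
  have key : ∀ j k : Fin 2, pd k (fun y => pd j u y) x
      = fderiv ℝ (fderiv ℝ u) x (Pi.single k 1) (Pi.single j 1) := by
    intro j k
    unfold pd
    rw [fderiv_clm_apply hfd (differentiableAt_const _)]
    simp
  rw [key, key]
  have hev : ∀ᶠ y in 𝓝 x, HasFDerivAt u (fderiv ℝ u y) y := by
    filter_upwards [hu2.eventually (by norm_num)] with y hy
    exact (hy.differentiableAt (by norm_num)).hasFDerivAt
  exact second_derivative_symmetric_of_eventually hev hfd.hasFDerivAt _ _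

lemma pd_u_diff {u : (Fin 2 → ℝ) → ℝ} {x : Fin 2 → ℝ} (hu2 : ContDiffAt ℝ 2 u x) (j : Fin 2) :
    DifferentiableAt ℝ (fun y => pd j u y) x := by
  have hfd : DifferentiableAt ℝ (fderiv ℝ u) x :=
    (hu2.fderiv_right (m := 1) le_rfl).differentiableAt one_ne_zero
  exact ((ContinuousLinearMap.apply ℝ ℝ (Pi.single j 1)).differentiableAt).comp x hfd

lemma alg_key (a : Fin 2 → Fin 2 → ℝ) (da : Fin 2 → Fin 2 → Fin 2 → ℝ)
    (r : Fin 2 → Fin 2 → ℝ) (dr : Fin 2 → Fin 2 → Fin 2 → ℝ)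
    (bb : Fin 2 → ℝ) (db : Fin 2 → Fin 2 → ℝ) (g : Fin 2 → ℝ) (h : Fin 2 → Fin 2 → ℝ)
    (hh : h 1 0 = h 0 1)
    (hC0 : ∀ i j, (a i j + a j i) / 2 = ∑ m, r m i * bb m * r m j)
    (hC2 : ∀ k i j, (da k i j + da k j i) / 2 =
      ∑ m, (dr k m i * bb m * r m j + r m i * db k m * r m j + r m i * bb m * dr k m j))
    (hC1 : ∑ i, ∑ j, (da i i j * g j + a i j * h i j) = 0) :
    ∑ i, ∑ k, r i k * (db k i * (∑ j, r i j * g j) +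
        bb i * (∑ j, (dr k i j * g j + r i j * h k j)))
      = -(∑ i, bb i * (∑ j, r i j * g j) * (∑ k, dr k i k)) -
        ∑ i, ∑ j, (da i i j - da i j i) / 2 * g j := by
  have c000 := hC2 0 0 0; have c001 := hC2 0 0 1
  have c110 := hC2 1 1 0; have c111 := hC2 1 1 1
  have d00 := hC0 0 0; have d01 := hC0 0 1; have d10 := hC0 1 0; have d11 := hC0 1 1
  simp only [Fin.sum_univ_two] at *
  linear_combination hC1 - (g 0 * c000 + g 1 * c001 + g 0 * c110 + g 1 * c111)
    - (h 0 0 * d00 + h 0 1 * d01 + h 1 0 * d10 + h 1 1 * d11)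
    + ((a 0 1 - a 1 0) / 2) * hh

section Key

variable {U : Set (Fin 2 → ℝ)} {A R : (Fin 2 → ℝ) → Matrix (Fin 2) (Fin 2) ℝ}
    {b : Fin 2 → (Fin 2 → ℝ) → ℝ} {lam : ℝ} {κA κR κB : NNReal}
    {u : (Fin 2 → ℝ) → ℝ} {x : Fin 2 → ℝ}

lemma key (hU : IsOpen U) (hx : x ∈ U) (hlam : 1 ≤ lam)
    (hell : IsUnifElliptic U A lam)
    (hALip : ∀ i j, LipschitzOnWith κA (fun x => A x i j) U)
    (horthm : (R x)ᵀ * R x = 1)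
    (hRLip : ∀ i j, LipschitzOnWith κR (fun x => R x i j) U)
    (hbLip : ∀ i, LipschitzOnWith κB (b i) U)
    (hsymm : ∀ y ∈ U, (1 / 2 : ℝ) • (A y + (A y)ᵀ) =
      (R y)ᵀ * Matrix.diagonal (fun i => b i y) * R y)
    (hu2 : ContDiffAt ℝ 2 u x)
    (hdA : ∀ i j, DifferentiableAt ℝ (fun y => A y i j) x)
    (hdR : ∀ i j, DifferentiableAt ℝ (fun y => R y i j) x)
    (hdb : ∀ i, DifferentiableAt ℝ (b i) x)
    (hPDE : ∑ i, pd i (fun y => ∑ j, A y i j * pd j u y) x = 0) :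
    (∑ i, dirD R i (fun y => b i y * dirD R i u y) x =
        -(∑ i, b i x * dirD R i u x * divRow R i x) -
          ∑ i, ∑ j, pd i (fun y => (A y i j - A y j i) / 2) x * pd j u x) ∧
      |∑ i, dirD R i (fun y => b i y * dirD R i u y) x| ≤
        (4 * lam * κR + 4 * κA + 4 * κB) * Real.sqrt (grad u x ⬝ᵥ grad u x) ∧
      |b 0 x * dirD R 0 (fun y => dirD R 0 u y) x +
          b 1 x * dirD R 1 (fun y => dirD R 1 u y) x| ≤
        (4 * lam * κR + 4 * κA + 4 * κB) * Real.sqrt (grad u x ⬝ᵥ grad u x) := by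
  -- scalar symmetric-part identity on U
  have hsymm' : ∀ y ∈ U, ∀ i j : Fin 2,
      (A y i j + A y j i) / 2 = ∑ m, R y m i * b m y * R y m j := by
    intro y hy i j
    have h2 := congrFun (congrFun (hsymm y hy) i) j
    simp only [Matrix.smul_apply, Matrix.add_apply, Matrix.transpose_apply, smul_eq_mul,
      Matrix.mul_apply, Matrix.diagonal_apply, Matrix.transpose_apply] at h2
    simp only [Fin.sum_univ_two] at h2 ⊢
    norm_num at h2
    linarith
  -- row orthonormality at x
  have horth : ∀ i j, ∑ m, R x i m * R x j m = if i = j then 1 else 0 := by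
    intro i j
    have h := mul_eq_one_comm.mp horthm
    have h2 := congrFun (congrFun h i) j
    simp only [Matrix.mul_apply, Matrix.transpose_apply, Matrix.one_apply] at h2
    rw [h2]
  -- b values via ellipticity
  have hval : ∀ i, R x i ⬝ᵥ (A x).mulVec (R x i) = b i x := by
    intro i
    fin_cases i <;>
    · have c00 := hsymm' x hx 0 0; have c01 := hsymm' x hx 0 1
      have c10 := hsymm' x hx 1 0; have c11 := hsymm' x hx 1 1
      have o00 := horth 0 0; have o01 := horth 0 1
      have o10 := horth 1 0; have o11 := horth 1 1
      simp only [Fin.sum_univ_two] at *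
      norm_num at o00 o01 o10 o11
      simp only [dotProduct, Matrix.mulVec, Fin.sum_univ_two, dotProduct, Fin.zero_eta, Fin.mk_one]
      first
      | linear_combination (R x 0 0 ^ 2) * c00 + (R x 0 0 * R x 0 1) * c01 +
          (R x 0 1 * R x 0 0) * c10 + (R x 0 1 ^ 2) * c11 +
          (b 0 x * (R x 0 0 * R x 0 0 + R x 0 1 * R x 0 1 + 1)) * o00 +
          (b 1 x * (R x 0 0 * R x 1 0 + R x 0 1 * R x 1 1)) * o01
      | linear_combination (R x 1 0 ^ 2) * c00 + (R x 1 0 * R x 1 1) * c01 +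
          (R x 1 1 * R x 1 0) * c10 + (R x 1 1 ^ 2) * c11 +
          (b 1 x * (R x 1 0 * R x 1 0 + R x 1 1 * R x 1 1 + 1)) * o11 +
          (b 0 x * (R x 1 0 * R x 0 0 + R x 1 1 * R x 0 1)) * o10
  have hlam0 : (0:ℝ) < lam := lt_of_lt_of_le one_pos hlam
  have hbb : ∀ i, |b i x| ≤ lam := by
    intro i
    have hξ : (R x i) ⬝ᵥ (R x i) = 1 := by
      have := horth i i; simpa [dotProduct] using this
    have h2 := (hell x hx).2 (R x i) (R x i)
    rw [hξ, Real.sqrt_one, hval i] at h2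
    have h1 := (hell x hx).1 (R x i)
    rw [hξ, hval i] at h1
    have hinv : 0 < lam⁻¹ := inv_pos.mpr hlam0
    rw [abs_le]
    constructor <;> nlinarith
  -- differentiability of pieces
  have hdg : ∀ j, DifferentiableAt ℝ (fun y => pd j u y) x := pd_u_diff hu2
  have hrwD : ∀ i, (fun y => dirD R i u y) = fun y => ∑ j, R y i j * pd j u y := by
    intro i; funext y; simp [dirD, grad, dotProduct]
  have hdD : ∀ i, DifferentiableAt ℝ (fun y => dirD R i u y) x := by
    intro i; rw [hrwD i]
    exact DifferentiableAt.fun_sum fun j _ => (hdR i j).fun_mul (hdg j)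
  -- E2 : pd of dirD u
  have hE2 : ∀ i k, pd k (fun y => dirD R i u y) x =
      ∑ j, (pd k (fun y => R y i j) x * pd j u x +
        R x i j * pd k (fun y => pd j u y) x) := by
    intro i k
    rw [hrwD i, pd_sum (fun j => (hdR i j).fun_mul (hdg j)) k]
    exact Finset.sum_congr rfl fun j _ => pd_mul (hdR i j) (hdg j) k
  -- E1 : pd of b * dirD u
  have hE1 : ∀ i k, pd k (fun y => b i y * dirD R i u y) x =
      pd k (b i) x * dirD R i u x + b i x * pd k (fun y => dirD R i u y) x :=
    fun i k => pd_mul (hdb i) (hdD i) k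
  -- B1
  have hB1 : ∀ i, dirD R i u x = ∑ j, R x i j * pd j u x := by
    intro i; simp [dirD, grad, dotProduct]
  -- B2 : dirD of any f
  have hB2 : ∀ i (f : (Fin 2 → ℝ) → ℝ), dirD R i f x = ∑ k, R x i k * pd k f x := by
    intro i f; simp [dirD, grad, dotProduct]
  -- E4 : skew entries
  have hE4 : ∀ i j k, pd k (fun y => (A y i j - A y j i) / 2) x =
      (pd k (fun y => A y i j) x - pd k (fun y => A y j i) x) / 2 := by
    intro i j k
    rw [pd_div_const ((hdA i j).fun_sub (hdA j i)) 2 k, pd_sub (hdA i j) (hdA j i) k]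
  -- C2 : derivative of the symmetric-part identity
  have hC2 : ∀ k i j : Fin 2,
      (pd k (fun y => A y i j) x + pd k (fun y => A y j i) x) / 2 =
      ∑ m, (pd k (fun y => R y m i) x * b m x * R x m j +
        R x m i * pd k (b m) x * R x m j +
        R x m i * b m x * pd k (fun y => R y m j) x) := by
    intro k i j
    have hev : (fun y => (A y i j + A y j i) / 2)
        =ᶠ[𝓝 x] (fun y => ∑ m, R y m i * b m y * R y m j) := by
      filter_upwards [hU.mem_nhds hx] with y hy
      exact hsymm' y hy i j
    have hfd : fderiv ℝ (fun y => (A y i j + A y j i) / 2) x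
        = fderiv ℝ (fun y => ∑ m, R y m i * b m y * R y m j) x := hev.fderiv_eq
    have hl : pd k (fun y => (A y i j + A y j i) / 2) x =
        (pd k (fun y => A y i j) x + pd k (fun y => A y j i) x) / 2 := by
      rw [pd_div_const ((hdA i j).fun_add (hdA j i)) 2 k, pd_add (hdA i j) (hdA j i) k]
    have hr : pd k (fun y => ∑ m, R y m i * b m y * R y m j) x =
        ∑ m, (pd k (fun y => R y m i) x * b m x * R x m j +
          R x m i * pd k (b m) x * R x m j +
          R x m i * b m x * pd k (fun y => R y m j) x) := by
      rw [pd_sum (fun m => ((hdR m i).fun_mul (hdb m)).fun_mul (hdR m j)) k]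
      exact Finset.sum_congr rfl fun m _ => by
        rw [pd_mul3 (hdR m i) (hdb m) (hdR m j) k]
    rw [← hl, ← hr]
    unfold pd
    rw [hfd]
  -- C1 : PDE expansion
  have hC1 : ∑ i, ∑ j, (pd i (fun y => A y i j) x * pd j u x +
      A x i j * pd i (fun y => pd j u y) x) = 0 := by
    rw [← hPDE]
    refine Finset.sum_congr rfl fun i _ => ?_
    rw [pd_sum (fun j => (hdA i j).fun_mul (hdg j)) i]
    exact (Finset.sum_congr rfl fun j _ => (pd_mul (hdA i j) (hdg j) i).symm)
  -- the main identity via alg_key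
  have halg := alg_key (fun i j => A x i j) (fun k i j => pd k (fun y => A y i j) x)
    (fun i j => R x i j) (fun k i j => pd k (fun y => R y i j) x)
    (fun i => b i x) (fun k i => pd k (b i) x)
    (fun j => pd j u x) (fun k j => pd k (fun y => pd j u y) x)
    (pd_pd_symm hu2 0 1) (hsymm' x hx) hC2 hC1
  have hmain : ∑ i, dirD R i (fun y => b i y * dirD R i u y) x =
      -(∑ i, b i x * dirD R i u x * divRow R i x) -
        ∑ i, ∑ j, pd i (fun y => (A y i j - A y j i) / 2) x * pd j u x := by
    calc ∑ i, dirD R i (fun y => b i y * dirD R i u y) x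
        = ∑ i, ∑ k, R x i k * (pd k (b i) x * (∑ j, R x i j * pd j u x) +
            b i x * (∑ j, (pd k (fun y => R y i j) x * pd j u x +
              R x i j * pd k (fun y => pd j u y) x))) := by
          refine Finset.sum_congr rfl fun i _ => ?_
          rw [hB2 i]
          refine Finset.sum_congr rfl fun k _ => ?_
          rw [hE1 i k, hE2 i k, hB1 i]
      _ = -(∑ i, b i x * (∑ j, R x i j * pd j u x) *
            (∑ k, pd k (fun y => R y i k) x)) -
          ∑ i, ∑ j, (pd i (fun y => A y i j) x - pd i (fun y => A y j i) x) / 2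
            * pd j u x := halg
      _ = -(∑ i, b i x * dirD R i u x * divRow R i x) -
          ∑ i, ∑ j, pd i (fun y => (A y i j - A y j i) / 2) x * pd j u x := by
          have hdiv : ∑ i, b i x * (∑ j, R x i j * pd j u x) *
              (∑ k, pd k (fun y => R y i k) x) =
              ∑ i, b i x * dirD R i u x * divRow R i x :=
            Finset.sum_congr rfl fun i _ => by rw [hB1 i]; rfl
          have hskew : ∑ i, ∑ j,
              (pd i (fun y => A y i j) x - pd i (fun y => A y j i) x) / 2 * pd j u x =
              ∑ i, ∑ j, pd i (fun y => (A y i j - A y j i) / 2) x * pd j u x :=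
            Finset.sum_congr rfl fun i _ => Finset.sum_congr rfl fun j _ => by
              rw [hE4 i j i]
          rw [hdiv, hskew]
  -- quantitative bounds
  clear halg hC1 hC2 hPDE hval hsymm hsymm' hell horthm hrwD hdD hdg hdA hdR hdb
  set s := Real.sqrt (grad u x ⬝ᵥ grad u x) with hs
  have hs0 : 0 ≤ s := Real.sqrt_nonneg _
  have hgg : grad u x ⬝ᵥ grad u x = pd 0 u x * pd 0 u x + pd 1 u x * pd 1 u x := by
    simp [grad, dotProduct, Fin.sum_univ_two]
  have hsq : ∀ t : ℝ, t ^ 2 ≤ grad u x ⬝ᵥ grad u x → |t| ≤ s := by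
    intro t ht
    rw [← Real.sqrt_sq_eq_abs]
    exact Real.sqrt_le_sqrt ht
  have hgj : ∀ j, |pd j u x| ≤ s := by
    have h0 : |pd 0 u x| ≤ s := by
      apply hsq; rw [hgg]; nlinarith [sq_nonneg (pd 1 u x)]
    have h1 : |pd 1 u x| ≤ s := by
      apply hsq; rw [hgg]; nlinarith [sq_nonneg (pd 0 u x)]
    exact Fin.forall_fin_two.2 ⟨h0, h1⟩
  have hnorm1 : ∀ i, R x i 0 * R x i 0 + R x i 1 * R x i 1 = 1 := by
    intro i
    have hoii := horth i i
    simpa using hoii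
  have hwle : ∀ i, |dirD R i u x| ≤ s := by
    intro i
    rw [hB1 i]
    apply hsq
    have hoii := hnorm1 i
    rw [hgg]
    simp only [Fin.sum_univ_two]
    nlinarith [sq_nonneg (R x i 0 * pd 1 u x - R x i 1 * pd 0 u x)]
  have hdivr : ∀ i, |divRow R i x| ≤ 2 * κR := by
    intro i
    have h0 := pd_abs_le hU hx (hRLip i 0) (0 : Fin 2)
    have h1 := pd_abs_le hU hx (hRLip i 1) (1 : Fin 2)
    have hsum : divRow R i x = pd 0 (fun y => R y i 0) x + pd 1 (fun y => R y i 1) x := by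
      simp [divRow, Fin.sum_univ_two]
    rw [hsum]
    calc |pd 0 (fun y => R y i 0) x + pd 1 (fun y => R y i 1) x|
        ≤ |pd 0 (fun y => R y i 0) x| + |pd 1 (fun y => R y i 1) x| := abs_add_le _ _
      _ ≤ κR + κR := add_le_add h0 h1
      _ = 2 * κR := by ring
  have hda : ∀ k i j, |pd k (fun y => A y i j) x| ≤ κA :=
    fun k i j => pd_abs_le hU hx (hALip i j) k
  have hdbb : ∀ k i, |pd k (b i) x| ≤ κB := fun k i => pd_abs_le hU hx (hbLip i) k
  have hterm1 : ∀ i, |b i x * dirD R i u x * divRow R i x| ≤ lam * s * (2 * κR) := by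
    intro i
    rw [abs_mul, abs_mul]
    have h1 : |b i x| * |dirD R i u x| ≤ lam * s :=
      mul_le_mul (hbb i) (hwle i) (abs_nonneg _) (le_of_lt hlam0)
    exact mul_le_mul h1 (hdivr i) (abs_nonneg _) (mul_nonneg (le_of_lt hlam0) hs0)
  have hterm2 : ∀ i j, |pd i (fun y => (A y i j - A y j i) / 2) x * pd j u x| ≤ κA * s := by
    intro i j
    rw [abs_mul, hE4 i j i]
    have h2 : |(pd i (fun y => A y i j) x - pd i (fun y => A y j i) x) / 2| ≤ κA := by
      rw [abs_div, abs_two]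
      have h3 := abs_sub (pd i (fun y => A y i j) x) (pd i (fun y => A y j i) x)
      have h4 := hda i i j
      have h5 := hda i j i
      rw [div_le_iff₀ (by norm_num : (0:ℝ) < 2)]
      linarith
    exact mul_le_mul h2 (hgj j) (abs_nonneg _) κA.coe_nonneg
  have hbd2 : |∑ i, dirD R i (fun y => b i y * dirD R i u y) x|
      ≤ 2 * (lam * s * (2 * κR)) + 4 * (κA * s) := by
    rw [hmain]
    have hX : |∑ i, b i x * dirD R i u x * divRow R i x| ≤ 2 * (lam * s * (2 * κR)) := by
      simp only [Fin.sum_univ_two]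
      refine (abs_add_le _ _).trans ?_
      linarith [hterm1 0, hterm1 1]
    have hY : |∑ i, ∑ j, pd i (fun y => (A y i j - A y j i) / 2) x * pd j u x|
        ≤ 4 * (κA * s) := by
      simp only [Fin.sum_univ_two]
      refine (abs_add_le _ _).trans ?_
      have hY0 := abs_add_le (pd 0 (fun y => (A y 0 0 - A y 0 0) / 2) x * pd 0 u x)
        (pd 0 (fun y => (A y 0 1 - A y 1 0) / 2) x * pd 1 u x)
      have hY1 := abs_add_le (pd 1 (fun y => (A y 1 0 - A y 0 1) / 2) x * pd 0 u x)
        (pd 1 (fun y => (A y 1 1 - A y 1 1) / 2) x * pd 1 u x)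
      linarith [hterm2 0 0, hterm2 0 1, hterm2 1 0, hterm2 1 1]
    calc |(-(∑ i, b i x * dirD R i u x * divRow R i x)) -
          ∑ i, ∑ j, pd i (fun y => (A y i j - A y j i) / 2) x * pd j u x|
        ≤ |(-(∑ i, b i x * dirD R i u x * divRow R i x))| +
          |∑ i, ∑ j, pd i (fun y => (A y i j - A y j i) / 2) x * pd j u x| := abs_sub _ _
      _ = |∑ i, b i x * dirD R i u x * divRow R i x| +
          |∑ i, ∑ j, pd i (fun y => (A y i j - A y j i) / 2) x * pd j u x| := by rw [abs_neg]
      _ ≤ 2 * (lam * s * (2 * κR)) + 4 * (κA * s) := add_le_add hX hY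
  have hκBs : 0 ≤ (κB : ℝ) * s := mul_nonneg κB.coe_nonneg hs0
  refine ⟨hmain, ?_, ?_⟩
  · have e : (4 * lam * κR + 4 * κA + 4 * κB) * s
        = 2 * (lam * s * (2 * κR)) + 4 * (κA * s) + 4 * (κB * s) := by ring
    linarith [hbd2, hκBs, e]
  · -- third bound
    have hDD : ∀ i, dirD R i (fun y => b i y * dirD R i u y) x
        = (∑ k, R x i k * pd k (b i) x) * dirD R i u x +
          b i x * dirD R i (fun y => dirD R i u y) x := by
      intro i
      rw [hB2 i (fun y => b i y * dirD R i u y), hB2 i (fun y => dirD R i u y)]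
      calc ∑ k, R x i k * pd k (fun y => b i y * dirD R i u y) x
          = ∑ k, R x i k * (pd k (b i) x * dirD R i u x +
              b i x * pd k (fun y => dirD R i u y) x) :=
            Finset.sum_congr rfl fun k _ => by rw [hE1 i k]
        _ = (∑ k, R x i k * pd k (b i) x) * dirD R i u x +
            b i x * (∑ k, R x i k * pd k (fun y => dirD R i u y) x) := by
            simp only [Fin.sum_univ_two]; ring
    have hsplit : b 0 x * dirD R 0 (fun y => dirD R 0 u y) x +
        b 1 x * dirD R 1 (fun y => dirD R 1 u y) x
        = (∑ i, dirD R i (fun y => b i y * dirD R i u y) x) -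
          ∑ i, (∑ k, R x i k * pd k (b i) x) * dirD R i u x := by
      rw [Fin.sum_univ_two, Fin.sum_univ_two, hDD 0, hDD 1]; ring
    have hrle : ∀ i k, |R x i k| ≤ 1 := by
      intro i k
      have hoii := hnorm1 i
      have hsq1 : (R x i k) ^ 2 ≤ 1 := by
        have q0 : (R x i 0) ^ 2 ≤ 1 := by nlinarith [sq_nonneg (R x i 1)]
        have q1 : (R x i 1) ^ 2 ≤ 1 := by nlinarith [sq_nonneg (R x i 0)]
        revert k
        exact Fin.forall_fin_two.2 ⟨q0, q1⟩
      calc |R x i k| = Real.sqrt ((R x i k) ^ 2) := (Real.sqrt_sq_eq_abs _).symm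
        _ ≤ Real.sqrt 1 := Real.sqrt_le_sqrt hsq1
        _ = 1 := Real.sqrt_one
    have hdbsum : ∀ i, |∑ k, R x i k * pd k (b i) x| ≤ 2 * κB := by
      intro i
      simp only [Fin.sum_univ_two]
      calc |R x i 0 * pd 0 (b i) x + R x i 1 * pd 1 (b i) x|
          ≤ |R x i 0 * pd 0 (b i) x| + |R x i 1 * pd 1 (b i) x| := abs_add_le _ _
        _ ≤ 1 * κB + 1 * κB := add_le_add
            (by rw [abs_mul]
                exact mul_le_mul (hrle i 0) (hdbb 0 i) (abs_nonneg _) zero_le_one)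
            (by rw [abs_mul]
                exact mul_le_mul (hrle i 1) (hdbb 1 i) (abs_nonneg _) zero_le_one)
        _ = 2 * κB := by ring
    have hterm3 : ∀ i, |(∑ k, R x i k * pd k (b i) x) * dirD R i u x| ≤ 2 * κB * s := by
      intro i
      rw [abs_mul]
      exact mul_le_mul (hdbsum i) (hwle i) (abs_nonneg _)
        (by positivity)
    have hY2 : |∑ i, (∑ k, R x i k * pd k (b i) x) * dirD R i u x| ≤ 2 * (2 * κB * s) := by
      simp only [Fin.sum_univ_two]
      refine (abs_add_le _ _).trans ?_
      have ht0 := hterm3 0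
      have ht1 := hterm3 1
      simp only [Fin.sum_univ_two] at ht0 ht1
      linarith
    rw [hsplit]
    calc |(∑ i, dirD R i (fun y => b i y * dirD R i u y) x) -
          ∑ i, (∑ k, R x i k * pd k (b i) x) * dirD R i u x|
        ≤ |∑ i, dirD R i (fun y => b i y * dirD R i u y) x| +
          |∑ i, (∑ k, R x i k * pd k (b i) x) * dirD R i u x| := abs_sub _ _
      _ ≤ (2 * (lam * s * (2 * κR)) + 4 * (κA * s)) + 2 * (2 * κB * s) :=
          add_le_add hbd2 hY2
      _ = (4 * lam * κR + 4 * κA + 4 * κB) * s := by ring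

end Key

theorem stmt13 :
    ∃ C : ℝ → NNReal → NNReal → NNReal → ℝ,
      ∀ (U : Set (Fin 2 → ℝ)) (A R : (Fin 2 → ℝ) → Matrix (Fin 2) (Fin 2) ℝ)
        (b : Fin 2 → (Fin 2 → ℝ) → ℝ) (lam : ℝ) (κA κR κB : NNReal)
        (u : (Fin 2 → ℝ) → ℝ),
        IsOpen U → 1 ≤ lam → IsUnifElliptic U A lam →
        (∀ i j, LipschitzOnWith κA (fun x => A x i j) U) →
        (∀ x ∈ U, (R x)ᵀ * R x = 1 ∧ (R x).det = 1) →
        (∀ i j, LipschitzOnWith κR (fun x => R x i j) U) →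
        (∀ i, LipschitzOnWith κB (b i) U) →
        (∀ x ∈ U, (1 / 2 : ℝ) • (A x + (A x)ᵀ) =
          (R x)ᵀ * Matrix.diagonal (fun i => b i x) * R x) →
        ContDiffOn ℝ 2 u U →
        (∀ᵐ x ∂(volume : Measure (Fin 2 → ℝ)), x ∈ U →
          ∑ i, pd i (fun y => ∑ j, A y i j * pd j u y) x = 0) →
        ∀ᵐ x ∂(volume : Measure (Fin 2 → ℝ)), x ∈ U →
          (∑ i, dirD R i (fun y => b i y * dirD R i u y) x =
              -(∑ i, b i x * dirD R i u x * divRow R i x) -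
                ∑ i, ∑ j, pd i (fun y => (A y i j - A y j i) / 2) x * pd j u x) ∧
          |∑ i, dirD R i (fun y => b i y * dirD R i u y) x| ≤
            C lam κA κR κB * Real.sqrt (grad u x ⬝ᵥ grad u x) ∧
          |b 0 x * dirD R 0 (fun y => dirD R 0 u y) x +
              b 1 x * dirD R 1 (fun y => dirD R 1 u y) x| ≤
            C lam κA κR κB * Real.sqrt (grad u x ⬝ᵥ grad u x) := by
  refine ⟨fun lam κA κR κB => 4 * lam * κR + 4 * κA + 4 * κB, ?_⟩
  intro U A R b lam κA κR κB u hU hlam hell hALip hRorth hRLip hbLip hsymm hu hpde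
  have hA_ae : ∀ᵐ x ∂(volume : Measure (Fin 2 → ℝ)), ∀ i j : Fin 2, x ∈ U →
      DifferentiableAt ℝ (fun y => A y i j) x := by
    rw [MeasureTheory.ae_all_iff]
    intro i
    rw [MeasureTheory.ae_all_iff]
    intro j
    filter_upwards [(hALip i j).ae_differentiableWithinAt_of_mem] with x hx hxU
    exact (hx hxU).differentiableAt (hU.mem_nhds hxU)
  have hR_ae : ∀ᵐ x ∂(volume : Measure (Fin 2 → ℝ)), ∀ i j : Fin 2, x ∈ U →
      DifferentiableAt ℝ (fun y => R y i j) x := by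
    rw [MeasureTheory.ae_all_iff]
    intro i
    rw [MeasureTheory.ae_all_iff]
    intro j
    filter_upwards [(hRLip i j).ae_differentiableWithinAt_of_mem] with x hx hxU
    exact (hx hxU).differentiableAt (hU.mem_nhds hxU)
  have hb_ae : ∀ᵐ x ∂(volume : Measure (Fin 2 → ℝ)), ∀ i : Fin 2, x ∈ U →
      DifferentiableAt ℝ (b i) x := by
    rw [MeasureTheory.ae_all_iff]
    intro i
    filter_upwards [(hbLip i).ae_differentiableWithinAt_of_mem] with x hx hxU
    exact (hx hxU).differentiableAt (hU.mem_nhds hxU)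
  filter_upwards [hA_ae, hR_ae, hb_ae, hpde] with x hdA hdR hdb hPDE hxU
  exact key hU hxU hlam hell hALip (hRorth x hxU).1 hRLip hbLip hsymm
    (hu.contDiffAt (hU.mem_nhds hxU)) (fun i j => hdA i j hxU) (fun i j => hdR i j hxU)
    (fun i => hdb i hxU) (hPDE hxU)
end
end

section
/- Let U ⊂ ℝ² be open, let R be a rotation-matrix-valued Lipschitz function on U, let B = diag(b₁, b₂) have Lipschitz entries on U, and suppose A₀ = Rᵀ B R is uniformly elliptic with constant λ ≥ 1. Let S be the positive-definite square root of A₀ (SᵀS = A₀). Then there exists C depending only on λ and the Lipschitz seminorms of R and B such that for every u ∈ C²(U), at a.e. x ∈ U: |∇(|S∇u|²)(x)| ≤ C(|∇u(x)|² + |∇u(x)|·|∇²u(x)|); and consequently at a.e. x ∈ U with ∇u(x) ≠ 0: |∇(log|S∇u|²)(x)| ≤ C(1 + |∇²u(x)|/|∇u(x)|), where |∇²u| = (Σ_{i,j}(∂_i∂_j u)²)^{1/2}. -/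
open Matrix MeasureTheory

noncomputable section

lemma abs_mul3 {x y z a c e : ℝ} (hx : |x| ≤ a) (hy : |y| ≤ c) (hz : |z| ≤ e) :
    |x * y * z| ≤ a * c * e := by
  have ha : 0 ≤ a := le_trans (abs_nonneg _) hx
  have hc : 0 ≤ c := le_trans (abs_nonneg _) hy
  rw [abs_mul, abs_mul]
  exact mul_le_mul (mul_le_mul hx hy (abs_nonneg _) ha) hz (abs_nonneg _)
    (mul_nonneg ha hc)

lemma tele {r1 r1' b1 b1' r2 r2' dd lamR lamB lam : ℝ}
    (hr1' : |r1'| ≤ 1) (hr2 : |r2| ≤ 1)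
    (hb : |b1| ≤ 4 * lam) (hb' : |b1'| ≤ 4 * lam)
    (hd1 : |r1 - r1'| ≤ lamR * dd) (hdb : |b1 - b1'| ≤ lamB * dd)
    (hd2 : |r2 - r2'| ≤ lamR * dd) :
    |r1 * b1 * r2 - r1' * b1' * r2'| ≤ (8 * lam * lamR + lamB) * dd := by
  have key : r1 * b1 * r2 - r1' * b1' * r2' =
      (r1 - r1') * b1 * r2 + r1' * (b1 - b1') * r2 + r1' * b1' * (r2 - r2') := by ring
  rw [key]
  have h1 : |(r1 - r1') * b1 * r2| ≤ (lamR * dd) * (4 * lam) * 1 := abs_mul3 hd1 hb hr2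
  have h2 : |r1' * (b1 - b1') * r2| ≤ 1 * (lamB * dd) * 1 := abs_mul3 hr1' hdb hr2
  have h3 : |r1' * b1' * (r2 - r2')| ≤ 1 * (4 * lam) * (lamR * dd) := abs_mul3 hr1' hb' hd2
  calc |(r1 - r1') * b1 * r2 + r1' * (b1 - b1') * r2 + r1' * b1' * (r2 - r2')|
      ≤ |(r1 - r1') * b1 * r2 + r1' * (b1 - b1') * r2| + |r1' * b1' * (r2 - r2')| := abs_add_le _ _
    _ ≤ |(r1 - r1') * b1 * r2| + |r1' * (b1 - b1') * r2| + |r1' * b1' * (r2 - r2')| := by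
        have := abs_add_le ((r1 - r1') * b1 * r2) (r1' * (b1 - b1') * r2); linarith
    _ ≤ (8 * lam * lamR + lamB) * dd := by nlinarith [h1, h2, h3]

lemma sqrt_sq_add_sq_le (a c : ℝ) : Real.sqrt (a ^ 2 + c ^ 2) ≤ |a| + |c| := by
  have h : a ^ 2 + c ^ 2 ≤ (|a| + |c|) ^ 2 := by
    nlinarith [mul_nonneg (abs_nonneg a) (abs_nonneg c), sq_abs a, sq_abs c]
  calc Real.sqrt (a ^ 2 + c ^ 2) ≤ Real.sqrt ((|a| + |c|) ^ 2) := Real.sqrt_le_sqrt h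
    _ = |a| + |c| := Real.sqrt_sq (by positivity)

/-- The explicit constant. -/
def Cfun (lam : ℝ) (κR κB : NNReal) : ℝ :=
  lam * (8 * ((2 * (8 * κR * Real.toNNReal lam + κB) : NNReal) : ℝ) + 16 * lam)

set_option maxHeartbeats 4000000 in
theorem stmt16 :
    ∃ C : ℝ → NNReal → NNReal → ℝ,
      ∀ (U : Set (Fin 2 → ℝ)) (R S : (Fin 2 → ℝ) → Matrix (Fin 2) (Fin 2) ℝ)
        (b : Fin 2 → (Fin 2 → ℝ) → ℝ) (lam : ℝ) (κR κB : NNReal),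
        IsOpen U →
        (∀ x ∈ U, (R x)ᵀ * R x = 1 ∧ (R x).det = 1) →
        (∀ i j, LipschitzOnWith κR (fun x => R x i j) U) →
        (∀ i, LipschitzOnWith κB (b i) U) →
        1 ≤ lam →
        IsUnifElliptic U
          (fun x => (R x)ᵀ * Matrix.diagonal (fun i => b i x) * R x) lam →
        (∀ x ∈ U, (S x).PosDef ∧
          (S x)ᵀ * S x = (R x)ᵀ * Matrix.diagonal (fun i => b i x) * R x) →
        ∀ u : (Fin 2 → ℝ) → ℝ, ContDiffOn ℝ 2 u U →
          (∀ᵐ x ∂(volume : Measure (Fin 2 → ℝ)), x ∈ U →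
            Real.sqrt (∑ i,
                (pd i (fun y => (S y).mulVec (grad u y) ⬝ᵥ (S y).mulVec (grad u y)) x) ^ 2) ≤
              C lam κR κB *
                ((grad u x ⬝ᵥ grad u x) +
                  Real.sqrt (grad u x ⬝ᵥ grad u x) *
                    Real.sqrt (∑ i, ∑ j, (pd i (fun y => pd j u y) x) ^ 2))) ∧
          (∀ᵐ x ∂(volume : Measure (Fin 2 → ℝ)), x ∈ U → grad u x ≠ 0 →
            Real.sqrt (∑ i,
                (pd i (fun y =>
                  Real.log ((S y).mulVec (grad u y) ⬝ᵥ (S y).mulVec (grad u y))) x) ^ 2) ≤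
              C lam κR κB *
                (1 + Real.sqrt (∑ i, ∑ j, (pd i (fun y => pd j u y) x) ^ 2) /
                  Real.sqrt (grad u x ⬝ᵥ grad u x))) := by
  classical
  refine ⟨Cfun, ?_⟩
  intro U R S b lam κR κB hU hRorth hRlip hblip hlam hell hS u hu
  have hlam0 : (0:ℝ) < lam := lt_of_lt_of_le one_pos hlam
  set κA : NNReal := 2 * (8 * κR * Real.toNNReal lam + κB) with hκA
  have hκAr : (κA : ℝ) = 2 * (8 * (κR:ℝ) * lam + (κB:ℝ)) := by
    rw [hκA]; push_cast [Real.coe_toNNReal lam hlam0.le]; ring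
  have hκAnn : (0:ℝ) ≤ (κA : ℝ) := (κA).coe_nonneg
  have hCval : Cfun lam κR κB = lam * (8 * (κA : ℝ) + 16 * lam) := rfl
  set A : (Fin 2 → ℝ) → Matrix (Fin 2) (Fin 2) ℝ :=
    fun x => (R x)ᵀ * Matrix.diagonal (fun i => b i x) * R x with hA
  -- entry formula
  have hAentry : ∀ x i j, A x i j = ∑ m, R x m i * b m x * R x m j := by
    intro x i j
    simp [hA, Matrix.mul_apply, Matrix.mul_diagonal, Matrix.transpose_apply]
  -- entry bound from ellipticity
  have hAbd : ∀ x ∈ U, ∀ i j, |A x i j| ≤ lam := by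
    intro x hx i j
    have h1 := (hell x hx).2 (Pi.single j 1) (Pi.single i 1)
    have h2 := (hell x hx).2 (Pi.single j 1) (-Pi.single i 1)
    simp [Matrix.mulVec_single, single_dotProduct, neg_dotProduct,
      dotProduct_neg] at h1 h2
    rw [abs_le]; constructor <;> nlinarith
  -- R entries bounded by 1
  have hRbd : ∀ x ∈ U, ∀ i j, |R x i j| ≤ 1 := by
    intro x hx i j
    have h := congrFun (congrFun (hRorth x hx).1 j) j
    simp [Matrix.mul_apply, Matrix.transpose_apply, Matrix.one_apply,
      Fin.sum_univ_two] at h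
    have h01 : i = 0 ∨ i = 1 := by omega
    rcases h01 with rfl | rfl <;> (rw [abs_le]; constructor <;> nlinarith)
  -- b bounded by 4*lam
  have hbbd : ∀ x ∈ U, ∀ m, |b m x| ≤ 4 * lam := by
    intro x hx m
    have hsq := (hRorth x hx).1
    have h2 : R x * (R x)ᵀ = 1 := mul_eq_one_comm.mp hsq
    have hD : R x * A x * (R x)ᵀ = Matrix.diagonal (fun i => b i x) := by
      rw [hA]
      calc R x * ((R x)ᵀ * Matrix.diagonal (fun i => b i x) * R x) * (R x)ᵀ
          = (R x * (R x)ᵀ) * Matrix.diagonal (fun i => b i x) * (R x * (R x)ᵀ) := by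
            simp only [Matrix.mul_assoc]
        _ = Matrix.diagonal (fun i => b i x) := by rw [h2]; simp
    have hb' : b m x = ∑ j, (∑ i, R x m i * A x i j) * R x m j := by
      have := congrFun (congrFun hD m) m
      simp [Matrix.mul_apply, Matrix.transpose_apply, Matrix.diagonal_apply] at this
      rw [← this]
      simp [Fin.sum_univ_two]
    rw [hb']; simp only [Fin.sum_univ_two]
    have t1 : |R x m 0 * A x 0 0 * R x m 0| ≤ 1 * lam * 1 :=
      abs_mul3 (hRbd x hx m 0) (hAbd x hx 0 0) (hRbd x hx m 0)
    have t2 : |R x m 1 * A x 1 0 * R x m 0| ≤ 1 * lam * 1 :=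
      abs_mul3 (hRbd x hx m 1) (hAbd x hx 1 0) (hRbd x hx m 0)
    have t3 : |R x m 0 * A x 0 1 * R x m 1| ≤ 1 * lam * 1 :=
      abs_mul3 (hRbd x hx m 0) (hAbd x hx 0 1) (hRbd x hx m 1)
    have t4 : |R x m 1 * A x 1 1 * R x m 1| ≤ 1 * lam * 1 :=
      abs_mul3 (hRbd x hx m 1) (hAbd x hx 1 1) (hRbd x hx m 1)
    have hab := abs_add_le (R x m 0 * A x 0 0 * R x m 0 + R x m 1 * A x 1 0 * R x m 0)
      (R x m 0 * A x 0 1 * R x m 1 + R x m 1 * A x 1 1 * R x m 1)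
    have hab1 := abs_add_le (R x m 0 * A x 0 0 * R x m 0) (R x m 1 * A x 1 0 * R x m 0)
    have hab2 := abs_add_le (R x m 0 * A x 0 1 * R x m 1) (R x m 1 * A x 1 1 * R x m 1)
    calc |(R x m 0 * A x 0 0 + R x m 1 * A x 1 0) * R x m 0 +
          (R x m 0 * A x 0 1 + R x m 1 * A x 1 1) * R x m 1|
        = |(R x m 0 * A x 0 0 * R x m 0 + R x m 1 * A x 1 0 * R x m 0) +
          (R x m 0 * A x 0 1 * R x m 1 + R x m 1 * A x 1 1 * R x m 1)| := by ring_nf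
      _ ≤ 4 * lam := by nlinarith [hab, hab1, hab2, t1, t2, t3, t4]
  -- Lipschitz bound for entries of A
  have haLip : ∀ i j, LipschitzOnWith κA (fun x => A x i j) U := by
    intro i j
    rw [lipschitzOnWith_iff_dist_le_mul]
    intro x hx y hy
    rw [Real.dist_eq]
    have hdd : (0:ℝ) ≤ dist x y := dist_nonneg
    have hRl : ∀ m n, |R x m n - R y m n| ≤ κR * dist x y := by
      intro m n
      have := (hRlip m n).dist_le_mul x hx y hy
      rwa [Real.dist_eq] at this
    have hbl : ∀ m, |b m x - b m y| ≤ κB * dist x y := by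
      intro m
      have := (hblip m).dist_le_mul x hx y hy
      rwa [Real.dist_eq] at this
    have key : ∀ m : Fin 2, |R x m i * b m x * R x m j - R y m i * b m y * R y m j| ≤
        (8 * lam * κR + κB) * dist x y := fun m =>
      tele (hRbd y hy m i) (hRbd x hx m j) (hbbd x hx m) (hbbd y hy m)
        (hRl m i) (hbl m) (hRl m j)
    have e1 := hAentry x i j
    have e2 := hAentry y i j
    rw [e1, e2, Fin.sum_univ_two, Fin.sum_univ_two]
    have habs := abs_sub (R x 0 i * b 0 x * R x 0 j + R x 1 i * b 1 x * R x 1 j)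
      (R y 0 i * b 0 y * R y 0 j + R y 1 i * b 1 y * R y 1 j)
    have h0 := key 0
    have h1 := key 1
    have : |R x 0 i * b 0 x * R x 0 j + R x 1 i * b 1 x * R x 1 j -
        (R y 0 i * b 0 y * R y 0 j + R y 1 i * b 1 y * R y 1 j)| ≤
        |R x 0 i * b 0 x * R x 0 j - R y 0 i * b 0 y * R y 0 j| +
        |R x 1 i * b 1 x * R x 1 j - R y 1 i * b 1 y * R y 1 j| := by
      have := abs_add_le (R x 0 i * b 0 x * R x 0 j - R y 0 i * b 0 y * R y 0 j)
        (R x 1 i * b 1 x * R x 1 j - R y 1 i * b 1 y * R y 1 j)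
      calc |R x 0 i * b 0 x * R x 0 j + R x 1 i * b 1 x * R x 1 j -
          (R y 0 i * b 0 y * R y 0 j + R y 1 i * b 1 y * R y 1 j)|
          = |(R x 0 i * b 0 x * R x 0 j - R y 0 i * b 0 y * R y 0 j) +
            (R x 1 i * b 1 x * R x 1 j - R y 1 i * b 1 y * R y 1 j)| := by ring_nf
        _ ≤ _ := this
    have hcoe : (κA : ℝ) * dist x y = 2 * ((8 * lam * κR + κB) * dist x y) := by
      rw [hκAr]; ring
    rw [hcoe]
    linarith
  -- extend the entries to globally Lipschitz functions
  choose ta hta1 hta2 using fun i j => (haLip i j).extend_real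
  -- a.e. differentiability of the extensions (Rademacher)
  have hae : ∀ᵐ x ∂(volume : Measure (Fin 2 → ℝ)), ∀ i j, DifferentiableAt ℝ (ta i j) x := by
    rw [MeasureTheory.ae_all_iff]
    intro i
    rw [MeasureTheory.ae_all_iff]
    intro j
    exact (hta1 i j).ae_differentiableAt
  -- main pointwise estimates
  have key : ∀ x, x ∈ U → (∀ i j, DifferentiableAt ℝ (ta i j) x) →
      (Real.sqrt (∑ i,
          (pd i (fun y => (S y).mulVec (grad u y) ⬝ᵥ (S y).mulVec (grad u y)) x) ^ 2) ≤
        Cfun lam κR κB *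
          ((grad u x ⬝ᵥ grad u x) +
            Real.sqrt (grad u x ⬝ᵥ grad u x) *
              Real.sqrt (∑ i, ∑ j, (pd i (fun y => pd j u y) x) ^ 2))) ∧
      (grad u x ≠ 0 →
        Real.sqrt (∑ i,
            (pd i (fun y =>
              Real.log ((S y).mulVec (grad u y) ⬝ᵥ (S y).mulVec (grad u y))) x) ^ 2) ≤
          Cfun lam κR κB *
            (1 + Real.sqrt (∑ i, ∑ j, (pd i (fun y => pd j u y) x) ^ 2) /
              Real.sqrt (grad u x ⬝ᵥ grad u x))) := by
    intro x hxU hdiff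
    have hx2 : ContDiffAt ℝ 2 u x := hu.contDiffAt (hU.mem_nhds hxU)
    have hF : DifferentiableAt ℝ (fderiv ℝ u) x :=
      (hx2.fderiv_right (m := 1) (by norm_num)).differentiableAt (by norm_num)
    set Dp : Fin 2 → ((Fin 2 → ℝ) →L[ℝ] ℝ) :=
      fun i => (fderiv ℝ (fderiv ℝ u) x).flip (Pi.single i 1) with hDp'
    have hp : ∀ i, HasFDerivAt (fun y => pd i u y) (Dp i) x := fun i => by
      simpa [pd] using hF.hasFDerivAt.clm_apply (hasFDerivAt_const (Pi.single i (1:ℝ)) x)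
    set Da : Fin 2 → Fin 2 → ((Fin 2 → ℝ) →L[ℝ] ℝ) := fun i j => fderiv ℝ (ta i j) x with hDa'
    set T : Fin 2 → Fin 2 → ((Fin 2 → ℝ) →L[ℝ] ℝ) :=
      fun i j => ta i j x • (pd i u x • Dp j + pd j u x • Dp i) + (pd i u x * pd j u x) • Da i j with hT'
    have hterm : ∀ i j, HasFDerivAt (fun y => ta i j y * (pd i u y * pd j u y)) (T i j) x :=
      fun i j => (hdiff i j).hasFDerivAt.mul ((hp i).mul (hp j))
    set D : (Fin 2 → ℝ) →L[ℝ] ℝ := ∑ i, ∑ j, T i j with hD'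
    have hg : HasFDerivAt (fun y => ∑ i, ∑ j, ta i j y * (pd i u y * pd j u y)) D x :=
      HasFDerivAt.fun_sum fun i _ => HasFDerivAt.fun_sum fun j _ => hterm i j
    have hfeq : ∀ y ∈ U, (S y).mulVec (grad u y) ⬝ᵥ (S y).mulVec (grad u y)
        = ∑ i, ∑ j, ta i j y * (pd i u y * pd j u y) := by
      intro y hyU
      have hSy : (S y)ᵀ * S y = A y := (hS y hyU).2
      have hstep : (S y).mulVec (grad u y) ⬝ᵥ (S y).mulVec (grad u y)
          = ∑ i, ∑ j, A y i j * (grad u y i * grad u y j) := by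
        rw [← hSy]
        simp [Matrix.mulVec, dotProduct, Matrix.mul_apply, Fin.sum_univ_two,
          Matrix.transpose_apply]
        ring
      rw [hstep]
      refine Finset.sum_congr rfl fun i _ => Finset.sum_congr rfl fun j _ => ?_
      have h1 : A y i j = ta i j y := hta2 i j hyU
      rw [h1]
      rfl
    have hfD : HasFDerivAt
        (fun y => (S y).mulVec (grad u y) ⬝ᵥ (S y).mulVec (grad u y)) D x := by
      refine hg.congr_of_eventuallyEq ?_
      filter_upwards [hU.mem_nhds hxU] with y hy using hfeq y hy
    set G := Real.sqrt (grad u x ⬝ᵥ grad u x) with hG'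
    set H := Real.sqrt (∑ i, ∑ j, (pd i (fun y => pd j u y) x) ^ 2) with hH'
    have hGnn : 0 ≤ G := Real.sqrt_nonneg _
    have hHnn : 0 ≤ H := Real.sqrt_nonneg _
    have hgg : grad u x ⬝ᵥ grad u x = pd 0 u x ^ 2 + pd 1 u x ^ 2 := by
      show (∑ i, grad u x i * grad u x i) = _
      rw [Fin.sum_univ_two]
      show pd 0 u x * pd 0 u x + pd 1 u x * pd 1 u x = _
      ring
    have hG2 : G * G = grad u x ⬝ᵥ grad u x := Real.mul_self_sqrt (by rw [hgg]; positivity)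
    have hpbd : ∀ i, |pd i u x| ≤ G := by
      intro i
      have h2 : pd i u x ^ 2 ≤ grad u x ⬝ᵥ grad u x := by
        rw [hgg]
        have h01 : i = 0 ∨ i = 1 := by omega
        rcases h01 with rfl | rfl <;> nlinarith [sq_nonneg (pd 0 u x), sq_nonneg (pd 1 u x)]
      calc |pd i u x| = Real.sqrt (pd i u x ^ 2) := (Real.sqrt_sq_eq_abs _).symm
        _ ≤ G := Real.sqrt_le_sqrt h2
    have hq : ∀ k i, Dp i (Pi.single k 1) = pd k (fun y => pd i u y) x := by
      intro k i
      have h1 : fderiv ℝ (fun y => pd i u y) x = Dp i := (hp i).fderiv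
      rw [pd, h1]
    have hqbd : ∀ k i, |Dp i (Pi.single k 1)| ≤ H := by
      intro k i
      rw [hq k i]
      have h2 : pd k (fun y => pd i u y) x ^ 2 ≤
          ∑ i', ∑ j', (pd i' (fun y => pd j' u y) x) ^ 2 := by
        simp only [Fin.sum_univ_two]
        have h01 : k = 0 ∨ k = 1 := by omega
        have h01' : i = 0 ∨ i = 1 := by omega
        rcases h01 with rfl | rfl <;> rcases h01' with rfl | rfl <;>
          nlinarith [sq_nonneg (pd 0 (fun y => pd 0 u y) x),
            sq_nonneg (pd 0 (fun y => pd 1 u y) x),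
            sq_nonneg (pd 1 (fun y => pd 0 u y) x),
            sq_nonneg (pd 1 (fun y => pd 1 u y) x)]
      calc |pd k (fun y => pd i u y) x|
          = Real.sqrt (pd k (fun y => pd i u y) x ^ 2) := (Real.sqrt_sq_eq_abs _).symm
        _ ≤ H := Real.sqrt_le_sqrt h2
    have htabd : ∀ i j, |ta i j x| ≤ lam := by
      intro i j
      have h1 : A x i j = ta i j x := hta2 i j hxU
      rw [← h1]
      exact hAbd x hxU i j
    have hDabd : ∀ k i j, |Da i j (Pi.single k 1)| ≤ (κA : ℝ) := by
      intro k i j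
      have h1 : ‖Da i j‖ ≤ (κA : ℝ) := norm_fderiv_le_of_lipschitz ℝ (hta1 i j)
      have h2 : |Da i j (Pi.single k 1)| ≤ ‖Da i j‖ * ‖(Pi.single k 1 : Fin 2 → ℝ)‖ := by
        rw [← Real.norm_eq_abs]
        exact (Da i j).le_opNorm _
      have h3 : ‖(Pi.single k 1 : Fin 2 → ℝ)‖ = 1 := by rw [Pi.norm_single]; simp
      rw [h3] at h2
      linarith
    set M : ℝ := lam * (G * H + G * H) + (G * G) * (κA : ℝ) with hM'
    have hMnn : 0 ≤ M := by
      have h1 : 0 ≤ G * H := mul_nonneg hGnn hHnn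
      have h2 : 0 ≤ G * G := mul_nonneg hGnn hGnn
      have h3 : 0 ≤ lam * (G * H + G * H) := mul_nonneg hlam0.le (by linarith)
      have h4 : 0 ≤ (G * G) * (κA : ℝ) := mul_nonneg h2 hκAnn
      rw [hM']; linarith
    have tb : ∀ k i j, |T i j (Pi.single k 1)| ≤ M := by
      intro k i j
      have hTapp : T i j (Pi.single k 1) =
          ta i j x * (pd i u x * Dp j (Pi.single k 1) + pd j u x * Dp i (Pi.single k 1)) +
            (pd i u x * pd j u x) * Da i j (Pi.single k 1) := by
        simp [hT', ContinuousLinearMap.add_apply, ContinuousLinearMap.smul_apply, smul_eq_mul]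
        ring
      rw [hTapp, hM']
      have h1 : |ta i j x * (pd i u x * Dp j (Pi.single k 1) + pd j u x * Dp i (Pi.single k 1))| ≤
          lam * (G * H + G * H) := by
        rw [abs_mul]
        have hin : |pd i u x * Dp j (Pi.single k 1) + pd j u x * Dp i (Pi.single k 1)| ≤
            G * H + G * H := by
          refine (abs_add_le _ _).trans ?_
          rw [abs_mul, abs_mul]
          exact add_le_add (mul_le_mul (hpbd i) (hqbd k j) (abs_nonneg _) hGnn)
            (mul_le_mul (hpbd j) (hqbd k i) (abs_nonneg _) hGnn)
        exact mul_le_mul (htabd i j) hin (abs_nonneg _) hlam0.le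
      have h2 : |(pd i u x * pd j u x) * Da i j (Pi.single k 1)| ≤ (G * G) * (κA : ℝ) := by
        rw [abs_mul, abs_mul]
        exact mul_le_mul (mul_le_mul (hpbd i) (hpbd j) (abs_nonneg _) hGnn) (hDabd k i j)
          (abs_nonneg _) (mul_nonneg hGnn hGnn)
      calc |ta i j x * (pd i u x * Dp j (Pi.single k 1) + pd j u x * Dp i (Pi.single k 1)) +
            (pd i u x * pd j u x) * Da i j (Pi.single k 1)|
          ≤ |ta i j x * (pd i u x * Dp j (Pi.single k 1) + pd j u x * Dp i (Pi.single k 1))| +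
            |(pd i u x * pd j u x) * Da i j (Pi.single k 1)| := abs_add_le _ _
        _ ≤ lam * (G * H + G * H) + (G * G) * (κA : ℝ) := add_le_add h1 h2
    have hDk : ∀ k, |D (Pi.single k 1)| ≤ 4 * M := by
      intro k
      have hDapp : D (Pi.single k 1) = T 0 0 (Pi.single k 1) + T 0 1 (Pi.single k 1) +
          (T 1 0 (Pi.single k 1) + T 1 1 (Pi.single k 1)) := by
        simp [hD', Fin.sum_univ_two, ContinuousLinearMap.add_apply]
      rw [hDapp]
      have ha1 := abs_add_le (T 0 0 (Pi.single k 1) + T 0 1 (Pi.single k 1))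
        (T 1 0 (Pi.single k 1) + T 1 1 (Pi.single k 1))
      have ha2 := abs_add_le (T 0 0 (Pi.single k 1)) (T 0 1 (Pi.single k 1))
      have ha3 := abs_add_le (T 1 0 (Pi.single k 1)) (T 1 1 (Pi.single k 1))
      have := tb k 0 0; have := tb k 0 1; have := tb k 1 0; have := tb k 1 1
      linarith
    constructor
    · -- first estimate
      have hpdf : ∀ k, pd k (fun y => (S y).mulVec (grad u y) ⬝ᵥ (S y).mulVec (grad u y)) x
          = D (Pi.single k 1) := by
        intro k
        have h1 : fderiv ℝ (fun y => (S y).mulVec (grad u y) ⬝ᵥ (S y).mulVec (grad u y)) x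
            = D := hfD.fderiv
        simp only [pd]
        rw [h1]
      rw [Fin.sum_univ_two, hpdf 0, hpdf 1]
      have h8 : Real.sqrt (D (Pi.single 0 1) ^ 2 + D (Pi.single 1 1) ^ 2) ≤ 8 * M := by
        refine (sqrt_sq_add_sq_le _ _).trans ?_
        have := hDk 0; have := hDk 1
        linarith
      refine h8.trans ?_
      rw [hCval, ← hG2, hM']
      nlinarith [mul_nonneg (mul_nonneg hκAnn (mul_nonneg hGnn hGnn)) (sub_nonneg.mpr hlam),
        mul_nonneg (mul_nonneg (mul_nonneg hlam0.le hGnn) hHnn) (sub_nonneg.mpr hlam),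
        mul_nonneg (mul_nonneg hlam0.le hlam0.le) (mul_nonneg hGnn hGnn),
        mul_nonneg (mul_nonneg hκAnn hlam0.le) (mul_nonneg hGnn hHnn)]
    · -- second estimate
      intro hgr
      have hggpos : 0 < grad u x ⬝ᵥ grad u x := by
        rw [hgg]
        have hex : ∃ i, grad u x i ≠ 0 := by
          by_contra hcon
          push_neg at hcon
          exact hgr (funext hcon)
        obtain ⟨i, hi⟩ := hex
        have hip : grad u x i = pd i u x := rfl
        rw [hip] at hi
        have h01 : i = 0 ∨ i = 1 := by omega
        rcases h01 with rfl | rfl <;>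
          nlinarith [mul_self_pos.mpr hi, sq_nonneg (pd 0 u x), sq_nonneg (pd 1 u x)]
      have hGpos : 0 < G := Real.sqrt_pos.mpr hggpos
      have hfAv : (S x).mulVec (grad u x) ⬝ᵥ (S x).mulVec (grad u x)
          = grad u x ⬝ᵥ (A x).mulVec (grad u x) := by
        have hSx : (S x)ᵀ * S x = A x := (hS x hxU).2
        rw [← hSx]
        simp [Matrix.mulVec, dotProduct, Matrix.mul_apply, Fin.sum_univ_two,
          Matrix.transpose_apply]
        ring
      set fx := (S x).mulVec (grad u x) ⬝ᵥ (S x).mulVec (grad u x) with hfx'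
      have hflb : lam⁻¹ * (grad u x ⬝ᵥ grad u x) ≤ fx := by
        rw [hfAv]
        exact (hell x hxU).1 (grad u x)
      have hfpos : 0 < fx := lt_of_lt_of_le (by positivity) hflb
      have hlog : HasFDerivAt
          (fun y => Real.log ((S y).mulVec (grad u y) ⬝ᵥ (S y).mulVec (grad u y)))
          (fx⁻¹ • D) x := hfD.log hfpos.ne'
      have hpdl : ∀ k, pd k
          (fun y => Real.log ((S y).mulVec (grad u y) ⬝ᵥ (S y).mulVec (grad u y))) x
          = fx⁻¹ * D (Pi.single k 1) := by
        intro k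
        simp only [pd]
        rw [hlog.fderiv]
        simp
      rw [Fin.sum_univ_two, hpdl 0, hpdl 1]
      have hfinv : 0 < fx⁻¹ := inv_pos.mpr hfpos
      have h8 : Real.sqrt ((fx⁻¹ * D (Pi.single 0 1)) ^ 2 + (fx⁻¹ * D (Pi.single 1 1)) ^ 2) ≤
          fx⁻¹ * (8 * M) := by
        refine (sqrt_sq_add_sq_le _ _).trans ?_
        rw [abs_mul, abs_mul, abs_of_pos hfinv]
        calc fx⁻¹ * |D (Pi.single 0 1)| + fx⁻¹ * |D (Pi.single 1 1)|
            = fx⁻¹ * (|D (Pi.single 0 1)| + |D (Pi.single 1 1)|) := by ring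
          _ ≤ fx⁻¹ * (8 * M) := by
              refine mul_le_mul_of_nonneg_left ?_ hfinv.le
              linarith [hDk 0, hDk 1]
      refine h8.trans ?_
      have hfxinv : fx⁻¹ ≤ lam / (G * G) := by
        rw [hG2]
        have h1 : 0 < lam⁻¹ * (grad u x ⬝ᵥ grad u x) := by positivity
        calc fx⁻¹ ≤ (lam⁻¹ * (grad u x ⬝ᵥ grad u x))⁻¹ := inv_anti₀ h1 hflb
          _ = lam / (grad u x ⬝ᵥ grad u x) := by
              rw [mul_inv, inv_inv]
              ring
      have hMle : fx⁻¹ * (8 * M) ≤ (lam / (G * G)) * (8 * M) :=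
        mul_le_mul_of_nonneg_right hfxinv (by linarith)
      refine hMle.trans ?_
      have heq : (lam / (G * G)) * (8 * M) =
          8 * (κA : ℝ) * lam + 16 * lam * lam * (H / G) := by
        rw [hM']
        field_simp
        ring
      rw [heq, hCval]
      have hr : 0 ≤ H / G := div_nonneg hHnn hGpos.le
      nlinarith [mul_nonneg (mul_nonneg hκAnn hlam0.le) hr,
        mul_nonneg hlam0.le hlam0.le, hκAnn, hlam,
        mul_nonneg (mul_nonneg hlam0.le hlam0.le) hr]
  constructor
  · filter_upwards [hae] with x hdiff hxU
    exact (key x hxU hdiff).1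
  · filter_upwards [hae] with x hdiff hxU hgr
    exact (key x hxU hdiff).2 hgr
end
end

section
/- Let (X, σ) be a measure space, let M > 1, C₀ ≥ 0, C₁ ≥ 1 and τ ∈ (0, 1). Let K : X → [0, ∞) be measurable with ∫_X K dσ = 1, with K ≤ C₁·M σ-a.e., with K·log K σ-integrable, and with ∫_X K log K dσ ≥ −C₀. Then ∫_{{K ≥ M^{−τ}}} K dσ ≥ (τ·log M − C₀) / ((1 + τ)·log M + log C₁). -/
open MeasureTheory

theorem stmt19 {X : Type*} [MeasurableSpace X] (σ : Measure X)
    (M C₀ C₁ τ : ℝ) (hM : 1 < M) (hC₀ : 0 ≤ C₀) (hC₁ : 1 ≤ C₁)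
    (hτ : 0 < τ) (hτ1 : τ < 1)
    (K : X → ℝ) (hKmeas : Measurable K) (hK0 : ∀ x, 0 ≤ K x)
    (hKint : Integrable K σ) (hK1 : ∫ x, K x ∂σ = 1)
    (hKbd : ∀ᵐ x ∂σ, K x ≤ C₁ * M)
    (hKlog : Integrable (fun x => K x * Real.log (K x)) σ)
    (hlow : -C₀ ≤ ∫ x, K x * Real.log (K x) ∂σ) :
    (τ * Real.log M - C₀) / ((1 + τ) * Real.log M + Real.log C₁) ≤
      ∫ x in {x | M ^ (-τ) ≤ K x}, K x ∂σ := by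
  have hMpos : (0:ℝ) < M := lt_trans one_pos hM
  have hC₁pos : (0:ℝ) < C₁ := lt_of_lt_of_le one_pos hC₁
  have hlogM : 0 < Real.log M := Real.log_pos hM
  have hlogC₁ : 0 ≤ Real.log C₁ := Real.log_nonneg hC₁
  set A : Set X := {x | M ^ (-τ) ≤ K x} with hA
  have hAmeas : MeasurableSet A := measurableSet_le measurable_const hKmeas
  set p := ∫ x in A, K x ∂σ with hp
  have hD : 0 < (1 + τ) * Real.log M + Real.log C₁ :=
    add_pos_of_pos_of_nonneg (mul_pos (by linarith) hlogM) hlogC₁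
  -- split entropy integral
  have hsplit : ∫ x in A, K x * Real.log (K x) ∂σ
      + ∫ x in Aᶜ, K x * Real.log (K x) ∂σ = ∫ x, K x * Real.log (K x) ∂σ :=
    integral_add_compl hAmeas hKlog
  have hKsplit : p + ∫ x in Aᶜ, K x ∂σ = 1 := by
    rw [hp, integral_add_compl hAmeas hKint, hK1]
  -- bound on A
  have h1 : ∫ x in A, K x * Real.log (K x) ∂σ
      ≤ p * Real.log (C₁ * M) := by
    have hpt : ∀ᵐ x ∂σ, K x * Real.log (K x) ≤ K x * Real.log (C₁ * M) := by
      refine hKbd.mono fun x hx => ?_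
      rcases eq_or_lt_of_le (hK0 x) with h | h
      · simp [← h]
      · exact mul_le_mul_of_nonneg_left (Real.log_le_log h hx) (hK0 x)
    have := setIntegral_mono_ae (hKlog.integrableOn)
      ((hKint.mul_const (Real.log (C₁ * M))).integrableOn) hpt (s := A)
    calc ∫ x in A, K x * Real.log (K x) ∂σ
        ≤ ∫ x in A, K x * Real.log (C₁ * M) ∂σ := this
      _ = p * Real.log (C₁ * M) := by rw [integral_mul_const]
  -- bound on Aᶜ
  have h2 : ∫ x in Aᶜ, K x * Real.log (K x) ∂σ
      ≤ (∫ x in Aᶜ, K x ∂σ) * Real.log (M ^ (-τ)) := by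
    have : ∫ x in Aᶜ, K x * Real.log (K x) ∂σ
        ≤ ∫ x in Aᶜ, K x * Real.log (M ^ (-τ)) ∂σ := by
      refine setIntegral_mono_on (hKlog.integrableOn)
        ((hKint.mul_const _).integrableOn) hAmeas.compl fun x hx => ?_
      have hxlt : K x < M ^ (-τ) := lt_of_not_ge hx
      rcases eq_or_lt_of_le (hK0 x) with h | h
      · simp [← h]
      · exact mul_le_mul_of_nonneg_left (Real.log_le_log h hxlt.le) (hK0 x)
    rw [integral_mul_const] at this
    exact this
  have hlogpow : Real.log (M ^ (-τ)) = -τ * Real.log M := Real.log_rpow hMpos _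
  have hlogmul : Real.log (C₁ * M) = Real.log C₁ + Real.log M :=
    Real.log_mul (ne_of_gt hC₁pos) (ne_of_gt hMpos)
  rw [div_le_iff₀ hD]
  rw [hlogpow] at h2
  rw [hlogmul] at h1
  nlinarith [hlow, hsplit, hKsplit, h1, h2]
end
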